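/- arXiv:1001.2620 — 6 statements merged into one kernel-verified Lean document; each statement's English description precedes it below -/
import Mathlib

section
/- There exists a weakly connected, weight-balanced graph on 3 nodes and an initial condition x̂ such that no Carathéodory solution of ẋ = −L q_Δ(x) exists starting at x̂. Concretely, for the path graph with edges {1,2} and {2,3} (unit weights, symmetric) and x̂ = (Δ, (3/2)Δ, 2Δ), the right-hand side satisfies: for all x in a neighborhood of x̂ with x₂ > (3/2)Δ, the second component of −L q_Δ(x) equals −Δ, and for all x in that neighborhood with x₂ < (3/2)Δ, the second component equals +Δ. -/
open Matrix MeasureTheory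

/-- The uniform quantizer with step `Δ`. -/
noncomputable def qd (Δ z : ℝ) : ℝ := ⌊z / Δ + 1 / 2⌋ * Δ

/-!
On the sup-norm ball of radius `Δ/2` around `x̂` the quantizer fixes the outer coordinates at `Δ`
and `2Δ`, while the middle one jumps from `Δ` to `2Δ` at `x₂ = 3Δ/2`; so the second component of
the field is `-Δ` on `{x₂ ≥ 3Δ/2}` and `+Δ` below. A solution from `x̂` stays in that ball for a
short time `ε`, and there `y = x₂` satisfies `y t = 3Δ/2 + ∫₀ᵗ g` with `g ≤ 0` where `y > 3Δ/2`
and `g ≥ 0` where `y < 3Δ/2`. Looking at the last time before `t` at which `y` was on the other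
side of the level shows that `y` can leave it in neither direction, so `y ≡ 3Δ/2`; but then
`g ≡ -Δ` and `y ε = 3Δ/2 - εΔ`.
-/

open Set Filter Topology

lemma qd_eq_of_mem_Ico {Δ z : ℝ} (hΔ : 0 < Δ) {n : ℤ}
    (hz : z ∈ Ico (n * Δ - Δ / 2) (n * Δ + Δ / 2)) : qd Δ z = n * Δ := by
  have h₁ : (n : ℝ) ≤ z / Δ + 1 / 2 := by
    rw [← sub_le_iff_le_add, le_div_iff₀ hΔ]; linarith [hz.1]
  have h₂ : z / Δ + 1 / 2 < n + 1 := by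
    rw [← lt_sub_iff_add_lt, div_lt_iff₀ hΔ]; linarith [hz.2]
  rw [qd, Int.floor_eq_iff.mpr ⟨h₁, h₂⟩]

lemma qd_comp_eq_of_dist_lt {Δ : ℝ} (hΔ : 0 < Δ) {v : Fin 3 → ℝ}
    (hv : dist v ![Δ, 3 / 2 * Δ, 2 * Δ] < Δ / 2) :
    (fun i => qd Δ (v i)) = ![Δ, if 3 / 2 * Δ ≤ v 1 then 2 * Δ else Δ, 2 * Δ] := by
  have hcoord : ∀ i, |v i - ![Δ, 3 / 2 * Δ, 2 * Δ] i| < Δ / 2 := fun i =>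
    (dist_le_pi_dist v _ i).trans_lt hv
  have h₀ := abs_lt.mp (hcoord 0)
  have h₁ := abs_lt.mp (hcoord 1)
  have h₂ := abs_lt.mp (hcoord 2)
  simp only [Fin.isValue, cons_val_zero, cons_val_one, cons_val_two, tail_cons, head_cons]
    at h₀ h₁ h₂
  ext i
  fin_cases i
  · simpa using qd_eq_of_mem_Ico hΔ (n := 1) ⟨by push_cast; linarith, by push_cast; linarith⟩
  · by_cases h : 3 / 2 * Δ ≤ v 1
    · simpa [h] using qd_eq_of_mem_Ico hΔ (n := 2) ⟨by push_cast; linarith, by push_cast; linarith⟩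
    · simpa [h] using qd_eq_of_mem_Ico hΔ (n := 1) ⟨by push_cast; linarith, by push_cast; linarith⟩
  · simpa using qd_eq_of_mem_Ico hΔ (n := 2) ⟨by push_cast; linarith, by push_cast; linarith⟩

lemma pathGraph_field_eq_of_dist_lt {Δ : ℝ} (hΔ : 0 < Δ) {v : Fin 3 → ℝ}
    (hv : dist v ![Δ, 3 / 2 * Δ, 2 * Δ] < Δ / 2) :
    -((!![1, -1, 0; -1, 2, -1; 0, -1, 1] : Matrix (Fin 3) (Fin 3) ℝ).mulVec fun i => qd Δ (v i)) =
      if 3 / 2 * Δ ≤ v 1 then ![Δ, -Δ, 0] else ![0, Δ, -Δ] := by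
  rw [qd_comp_eq_of_dist_lt hΔ hv]
  split_ifs <;> ext i <;> fin_cases i <;> simp <;> ring

theorem ContinuousOn.exists_Icc_mapsTo {X : Type*} [TopologicalSpace X] {x : ℝ → X} {a T : ℝ}
    (haT : a < T) (hx : ContinuousOn x (Icc a T)) {U : Set X} (hU : U ∈ 𝓝 (x a)) :
    ∃ ε ∈ Ioc a T, MapsTo x (Icc a ε) U := by
  have : x ⁻¹' U ∈ 𝓝[≥] a := by
    rw [← nhdsWithin_Icc_eq_nhdsGE haT]
    exact hx a (left_mem_Icc.2 haT.le) hU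
  obtain ⟨u, hau, hsub⟩ := mem_nhdsGE_iff_exists_Icc_subset.1 this
  exact ⟨min u T, ⟨lt_min hau haT, min_le_right _ _⟩,
    fun s hs => hsub ⟨hs.1, hs.2.trans (min_le_left _ _)⟩⟩

theorem ContinuousOn.integrableOn_Icc_ite {E : Type*} [NormedAddCommGroup E] {y : ℝ → ℝ}
    {a b c : ℝ} (hy : ContinuousOn y (Icc a b)) (p q : E) :
    IntegrableOn (fun s => if c ≤ y s then p else q) (Icc a b) := by
  have hmeas :
      AEStronglyMeasurable (fun s => if c ≤ y s then p else q) (volume.restrict (Icc a b)) :=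
    (StronglyMeasurable.ite (p := (c ≤ ·)) measurableSet_Ici stronglyMeasurable_const
      stronglyMeasurable_const).aestronglyMeasurable.comp_aemeasurable
      (hy.aemeasurable measurableSet_Icc)
  refine Integrable.of_bound hmeas (‖p‖ + ‖q‖) (Eventually.of_forall fun s => ?_)
  split_ifs
  · exact le_add_of_nonneg_right (norm_nonneg q)
  · exact le_add_of_nonneg_left (norm_nonneg p)

theorem ContinuousOn.exists_mem_Ico_forall_Ioc_lt {y : ℝ → ℝ} {a t c : ℝ}
    (hy : ContinuousOn y (Icc a t)) (hat : a ≤ t) (ha : y a ≤ c) (ht : c < y t) :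
    ∃ t₀ ∈ Ico a t, y t₀ ≤ c ∧ ∀ u ∈ Ioc t₀ t, c < y u := by
  set S := Icc a t ∩ y ⁻¹' Iic c
  have hS : IsClosed S := hy.preimage_isClosed_of_isClosed isClosed_Icc isClosed_Iic
  have hbdd : BddAbove S := bddAbove_Icc.mono inter_subset_left
  have hmem : sSup S ∈ S := hS.csSup_mem ⟨a, left_mem_Icc.2 hat, ha⟩ hbdd
  refine ⟨sSup S, ⟨hmem.1.1, hmem.1.2.lt_of_ne fun h => ?_⟩, hmem.2, fun u hu => ?_⟩
  · exact ht.not_ge (h ▸ hmem.2)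
  · by_contra! hle
    exact hu.1.not_ge (le_csSup hbdd ⟨⟨hmem.1.1.trans hu.1.le, hu.2⟩, hle⟩)

theorem le_of_eq_add_integral_of_nonpos {y g : ℝ → ℝ} {a b c : ℝ}
    (hy : ContinuousOn y (Icc a b)) (hg : IntegrableOn g (Icc a b)) (hya : y a ≤ c)
    (hint : ∀ t ∈ Icc a b, y t = y a + ∫ u in a..t, g u)
    (hneg : ∀ u ∈ Icc a b, c < y u → g u ≤ 0) :
    ∀ t ∈ Icc a b, y t ≤ c := by
  intro t ht
  by_contra! hct
  obtain ⟨t₀, ht₀, hyt₀, habove⟩ :=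
    (hy.mono (Icc_subset_Icc_right ht.2)).exists_mem_Ico_forall_Ioc_lt ht.1 hya hct
  have ht₀ab : t₀ ∈ Icc a b := ⟨ht₀.1, ht₀.2.le.trans ht.2⟩
  have hii : ∀ s ∈ Icc a b, IntervalIntegrable g volume a s := fun s hs =>
    (hg.mono_set (uIcc_subset_Icc (left_mem_Icc.2 (hs.1.trans hs.2)) hs)).intervalIntegrable
  have hdiff : y t - y t₀ = ∫ u in t₀..t, g u := by
    rw [hint t ht, hint t₀ ht₀ab, add_sub_add_left_eq_sub,
      intervalIntegral.integral_interval_sub_left (hii t ht) (hii t₀ ht₀ab)]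
  have hnonpos : ∫ u in t₀..t, g u ≤ 0 := by
    rw [intervalIntegral.integral_of_le ht₀.2.le]
    exact setIntegral_nonpos measurableSet_Ioc fun u hu =>
      hneg u ⟨ht₀.1.trans hu.1.le, hu.2.trans ht.2⟩ (habove u hu)
  linarith

theorem eqOn_of_eq_add_integral {y g : ℝ → ℝ} {a b c : ℝ}
    (hy : ContinuousOn y (Icc a b)) (hg : IntegrableOn g (Icc a b)) (hya : y a = c)
    (hint : ∀ t ∈ Icc a b, y t = y a + ∫ u in a..t, g u)
    (hneg : ∀ u ∈ Icc a b, c < y u → g u ≤ 0) (hpos : ∀ u ∈ Icc a b, y u < c → 0 ≤ g u) :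
    EqOn y (fun _ => c) (Icc a b) := by
  have hle := le_of_eq_add_integral_of_nonpos hy hg hya.le hint hneg
  have hge := le_of_eq_add_integral_of_nonpos (y := -y) (g := -g) (c := -c) hy.neg hg.neg
    (by simp [hya]) (fun t ht => by simp [hint t ht, intervalIntegral.integral_neg]; ring)
    (fun u hu h => neg_nonpos.2 (hpos u hu (neg_lt_neg_iff.1 h)))
  exact fun t ht => le_antisymm (hle t ht) (neg_le_neg_iff.1 (hge t ht))

theorem not_forall_eq_add_integral_ite {y : ℝ → ℝ} {a b c Δ : ℝ} (hab : a < b) (hΔ : 0 < Δ)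
    (hy : ContinuousOn y (Icc a b)) (hya : y a = c) :
    ¬ ∀ t ∈ Icc a b, y t = c + ∫ u in a..t, if c ≤ y u then -Δ else Δ := by
  intro hint
  have hconst : EqOn y (fun _ => c) (Icc a b) :=
    eqOn_of_eq_add_integral hy (hy.integrableOn_Icc_ite _ _) hya (by rwa [hya])
      (fun u _ h => by simp [h.le]; linarith) (fun u _ h => by simp [not_le.2 h]; linarith)
  have hb := hint b (right_mem_Icc.2 hab.le)
  rw [intervalIntegral.integral_congr (g := fun _ => -Δ) fun u hu => by
      rw [uIcc_of_le hab.le] at hu; simp [hconst hu],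
    intervalIntegral.integral_const, hconst (right_mem_Icc.2 hab.le)] at hb
  rw [smul_eq_mul] at hb
  nlinarith [mul_pos (sub_pos.2 hab) hΔ]

/-- for the path graph on 3 nodes (unit weights, symmetric;
Laplacian `L`) and the initial condition `x̂ = (Δ, (3/2)Δ, 2Δ)`, the vector
field `−L q_Δ(x)` points towards the discontinuity surface `x₂ = (3/2)Δ` from
both sides (second component `−Δ` above, `+Δ` below, on a whole neighborhood
of `x̂`), and consequently no Carathéodory solution of `ẋ = −L q_Δ(x)` issues
from `x̂`. -/
theorem no_caratheodory_solution (Δ : ℝ) (hΔ : 0 < Δ)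
    (L : Matrix (Fin 3) (Fin 3) ℝ)
    (hL : L = !![1, -1, 0; -1, 2, -1; 0, -1, 1])
    (xhat : Fin 3 → ℝ) (hxhat : xhat = ![Δ, 3 / 2 * Δ, 2 * Δ]) :
    (∃ U ∈ nhds xhat, ∀ x ∈ U,
      (3 / 2 * Δ < x 1 → (-(L.mulVec fun i => qd Δ (x i))) 1 = -Δ) ∧
      (x 1 < 3 / 2 * Δ → (-(L.mulVec fun i => qd Δ (x i))) 1 = Δ)) ∧
    ¬ ∃ (x : ℝ → Fin 3 → ℝ) (T : ℝ), 0 < T ∧ x 0 = xhat ∧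
        ContinuousOn x (Set.Icc 0 T) ∧
        ∀ t ∈ Set.Icc (0 : ℝ) T,
          x t = xhat + ∫ s in (0 : ℝ)..t, -(L.mulVec fun i => qd Δ (x s i)) := by
  subst hL hxhat
  refine ⟨⟨Metric.ball _ (Δ / 2), Metric.ball_mem_nhds _ (half_pos hΔ), fun v hv => ?_⟩, ?_⟩
  · rw [pathGraph_field_eq_of_dist_lt hΔ hv]
    exact ⟨fun h => by simp [h.le], fun h => by simp [not_le.2 h]⟩
  rintro ⟨x, T, hT, hx0, hx, hsol⟩
  obtain ⟨ε, ⟨hε, hεT⟩, hball⟩ :=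
    hx.exists_Icc_mapsTo hT (Metric.ball_mem_nhds (x 0) (half_pos hΔ))
  rw [hx0] at hball
  have hy : ContinuousOn (fun t => x t 1) (Icc 0 ε) :=
    ((continuous_apply 1).comp_continuousOn hx).mono (Icc_subset_Icc_right hεT)
  refine not_forall_eq_add_integral_ite (c := 3 / 2 * Δ) hε hΔ hy (by simp [hx0]) fun t ht => ?_
  have hsub : uIcc 0 t ⊆ Icc 0 ε := by rw [uIcc_of_le ht.1]; exact Icc_subset_Icc_right ht.2
  have hfield := fun s (hs : s ∈ uIcc 0 t) => pathGraph_field_eq_of_dist_lt hΔ (hball (hsub hs))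
  have hproj :=
    (ContinuousLinearMap.proj (R := ℝ) (φ := fun _ : Fin 3 => ℝ) 1).intervalIntegral_comp_comm
      ((hy.integrableOn_Icc_ite (c := 3 / 2 * Δ) ![Δ, -Δ, 0] ![0, Δ, -Δ]).mono_set
        hsub).intervalIntegrable
  rw [ContinuousLinearMap.proj_apply] at hproj
  rw [congrFun (hsol t ⟨ht.1, ht.2.trans hεT⟩) 1, intervalIntegral.integral_congr hfield,
    Pi.add_apply, ← hproj]
  simp [apply_ite]
end

section
/- Along any Krasowskii solution of ẋ ∈ −L·K(q_Δ(x)), the deviation vector y = x − x_ave·𝟙 satisfies, for almost every t: d/dt (½‖y‖²) ≤ −λ₂(Sym(L))·‖y‖·(‖y‖ − (‖L‖/λ₂(Sym(L)))·(Δ/2)·√N). Consequently x(t) converges to the set M = {x : (1/√N)‖x − x_ave(0)𝟙‖ ≤ (‖L‖/λ₂(Sym(L)))·(Δ/2)}. -/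
open Matrix MeasureTheory

/-- The Krasowskii set-valued regularization of a map between normed spaces. -/
noncomputable def kras {E F : Type*} [NormedAddCommGroup E] [NormedAddCommGroup F]
    [NormedSpace ℝ F] (f : E → F) (x : E) : Set F :=
  ⋂ δ > 0, closure (convexHull ℝ (f '' Metric.ball x δ))

/-- The Euclidean norm of a vector in `ℝ^N`. -/
noncomputable def en {N : ℕ} (v : Fin N → ℝ) : ℝ := Real.sqrt (∑ i, v i ^ 2)

/-!
Every `v ∈ K(q_Δ)(x)` lies within `Δ/2` of `x` in the sup norm, so `v = x + e` with
`‖e‖ ≤ √N·Δ/2`. Because `L𝟙 = 0` and (by balance) `𝟙ᵀL = 0`, the average of `x` is conserved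
and `⟪y, ẏ⟫ = -⟪y, L y⟫ - ⟪y, L e⟫`. Connectivity makes `span 𝟙` the kernel of `Sym(L)`, so for
`y ⊥ 𝟙` we get `⟪y, L y⟫ = ⟪y, Sym(L) y⟫ ≥ λ₂‖y‖²`, while `|⟪y, L e⟫| ≤ ‖L‖‖y‖‖e‖`. Thus
`V = ½‖y‖²` decreases at a rate bounded away from zero while `‖y‖` exceeds
`(‖L‖/λ₂)(Δ/2)√N + δ`. Since `V` is absolutely continuous, the fundamental theorem of calculus
turns this almost-everywhere bound into eventual entry into, and permanence in, that ball.
-/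

open Finset Set Filter
open scoped InnerProductSpace

lemma abs_qd_sub_le {Δ : ℝ} (hΔ : 0 < Δ) (z : ℝ) : |qd Δ z - z| ≤ Δ / 2 := by
  have h₁ : (⌊z / Δ + 1 / 2⌋ : ℝ) ≤ z / Δ + 1 / 2 := Int.floor_le _
  have h₂ : z / Δ + 1 / 2 < ⌊z / Δ + 1 / 2⌋ + 1 := Int.lt_floor_add_one _
  rw [qd, abs_le]
  constructor <;> nlinarith [div_mul_cancel₀ z hΔ.ne']

lemma kras_subset_closedBall {E : Type*} [NormedAddCommGroup E] [NormedSpace ℝ E]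
    {f : E → E} {c : ℝ} (hf : ∀ z, dist (f z) z ≤ c) (x : E) :
    kras f x ⊆ Metric.closedBall x c := by
  intro v hv
  refine Metric.mem_closedBall.2 (le_of_forall_pos_le_add fun δ hδ => ?_)
  have himage : f '' Metric.ball x δ ⊆ Metric.closedBall x (c + δ) := by
    rintro _ ⟨z, hz, rfl⟩
    exact (dist_triangle _ z _).trans (add_le_add (hf z) (Metric.mem_ball.1 hz).le)
  exact closure_minimal (convexHull_min himage (convex_closedBall _ _)) Metric.isClosed_closedBall
    (mem_iInter₂.1 hv δ hδ)

lemma en_eq_norm {N : ℕ} (v : Fin N → ℝ) : en v = ‖WithLp.toLp 2 v‖ := by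
  simp [en, EuclideanSpace.norm_eq]

lemma en_nonneg {N : ℕ} (v : Fin N → ℝ) : 0 ≤ en v := Real.sqrt_nonneg _

lemma en_sq {N : ℕ} (v : Fin N → ℝ) : en v ^ 2 = v ⬝ᵥ v := by
  rw [en, Real.sq_sqrt (Finset.sum_nonneg fun i _ => sq_nonneg _)]
  simp [dotProduct, sq]

lemma en_le_sqrt_mul_norm {N : ℕ} (v : Fin N → ℝ) : en v ≤ Real.sqrt N * ‖v‖ := by
  rw [← Real.sqrt_sq (norm_nonneg v), ← Real.sqrt_mul (Nat.cast_nonneg N)]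
  refine Real.sqrt_le_sqrt ?_
  calc ∑ i, v i ^ 2 ≤ ∑ _i : Fin N, ‖v‖ ^ 2 :=
        Finset.sum_le_sum fun i _ => by
          rw [← sq_abs]; exact pow_le_pow_left₀ (abs_nonneg _) (norm_le_pi_norm v i) 2
    _ = N * ‖v‖ ^ 2 := by simp

lemma abs_dotProduct_le_en_mul_en {N : ℕ} (u v : Fin N → ℝ) : |u ⬝ᵥ v| ≤ en u * en v := by
  simpa [en_eq_norm, EuclideanSpace.inner_toLp_toLp, dotProduct_comm] using
    abs_real_inner_le_norm (WithLp.toLp 2 u) (WithLp.toLp 2 v)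

-- The balls in `kras` are sup-norm balls of `Fin N → ℝ`, whence the factor `√N`.
lemma en_sub_le_of_mem_kras_qd {N : ℕ} {Δ : ℝ} (hΔ : 0 < Δ) {x v : Fin N → ℝ}
    (hv : v ∈ kras (fun y i => qd Δ (y i)) x) : en (v - x) ≤ Δ / 2 * Real.sqrt N := by
  have hq : ∀ z : Fin N → ℝ, dist (fun i => qd Δ (z i)) z ≤ Δ / 2 := fun z =>
    (dist_pi_le_iff (by positivity)).2 fun i => by rw [Real.dist_eq]; exact abs_qd_sub_le hΔ _
  have hvx : ‖v - x‖ ≤ Δ / 2 := by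
    simpa [dist_eq_norm] using kras_subset_closedBall hq x hv
  calc en (v - x) ≤ Real.sqrt N * ‖v - x‖ := en_le_sqrt_mul_norm _
    _ ≤ Δ / 2 * Real.sqrt N := by rw [mul_comm]; gcongr

theorem LinearMap.IsSymmetric.mul_norm_sq_le_inner_apply_self {E : Type*}
    [NormedAddCommGroup E] [InnerProductSpace ℝ E] [FiniteDimensional ℝ E]
    {T : E →ₗ[ℝ] E} (hT : T.IsSymmetric) {lam : ℝ}
    (hlam : ∀ μ : ℝ, μ ≠ 0 → Module.End.HasEigenvalue T μ → lam ≤ μ)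
    {u : E} (hu : ∀ v, T v = 0 → ⟪v, u⟫_ℝ = 0) :
    lam * ‖u‖ ^ 2 ≤ ⟪T u, u⟫_ℝ := by
  set b := hT.eigenvectorBasis rfl
  set μ := hT.eigenvalues rfl
  set c := b.repr u
  -- orthogonality to `ker T` kills the coefficients of `u` along zero eigenvalues
  have hcoeff : ∀ i, lam * c i ^ 2 ≤ μ i * c i ^ 2 := by
    intro i
    by_cases hμ : μ i = 0
    · have hker : T (b i) = 0 := by simp [b, show hT.eigenvalues rfl i = 0 from hμ]
      have : c i = 0 := by simpa [c, b.repr_apply_apply] using hu _ hker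
      simp [this]
    · exact mul_le_mul_of_nonneg_right (hlam _ hμ (hT.hasEigenvalue_eigenvalues rfl i))
        (sq_nonneg _)
  calc lam * ‖u‖ ^ 2 = ∑ i, lam * c i ^ 2 := by
        rw [← b.repr.norm_map, EuclideanSpace.norm_sq_eq, Finset.mul_sum]; simp [c]
    _ ≤ ∑ i, μ i * c i ^ 2 := Finset.sum_le_sum fun i _ => hcoeff i
    _ = ⟪T u, u⟫_ℝ := by
        rw [← b.repr.inner_map_map, EuclideanSpace.inner_eq_star_dotProduct]
        simp only [dotProduct, c, μ, b, hT.eigenvectorBasis_apply_self_apply, star_trivial,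
          RCLike.ofReal_real_eq_id, id_eq]
        exact Finset.sum_congr rfl fun i _ => by ring

theorem Matrix.IsHermitian.mul_dotProduct_self_le_dotProduct_mulVec {ι : Type*} [Fintype ι]
    [DecidableEq ι] {S : Matrix ι ι ℝ} (hS : S.IsHermitian) {lam : ℝ}
    (hlam : lam ∈ lowerBounds {μ : ℝ | μ ≠ 0 ∧ ∃ v : ι → ℝ, v ≠ 0 ∧ S *ᵥ v = μ • v})
    {u : ι → ℝ} (hu : ∀ v, S *ᵥ v = 0 → v ⬝ᵥ u = 0) :
    lam * (u ⬝ᵥ u) ≤ u ⬝ᵥ (S *ᵥ u) := by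
  have key := (Matrix.isSymmetric_toEuclideanLin_iff.2 hS).mul_norm_sq_le_inner_apply_self
    (u := WithLp.toLp 2 u) (lam := lam) ?_ ?_
  · rw [← real_inner_self_eq_norm_sq] at key
    change lam * ⟪WithLp.toLp 2 u, WithLp.toLp 2 u⟫_ℝ ≤
      ⟪WithLp.toLp 2 (S *ᵥ u), WithLp.toLp 2 u⟫_ℝ at key
    simpa only [EuclideanSpace.inner_toLp_toLp, star_trivial] using key
  · intro μ hμ hμS
    obtain ⟨w, hw, hw0⟩ := hμS.exists_hasEigenvector
    refine hlam ⟨hμ, WithLp.ofLp w, by simpa using hw0, ?_⟩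
    exact congrArg WithLp.ofLp (Module.End.mem_eigenspace_iff.1 hw)
  · intro v hv
    rw [EuclideanSpace.inner_eq_star_dotProduct, star_trivial, dotProduct_comm]
    exact hu (WithLp.ofLp v) (congrArg WithLp.ofLp hv)

namespace Matrix

lemma isHermitian_half_smul_add_transpose {ι : Type*} (M : Matrix ι ι ℝ) :
    ((1 / 2 : ℝ) • (M + Mᵀ)).IsHermitian := by
  simp [IsHermitian, conjTranspose_eq_transpose_of_trivial, add_comm]

lemma dotProduct_half_smul_add_transpose_mulVec {ι : Type*} [Fintype ι] (M : Matrix ι ι ℝ)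
    (u : ι → ℝ) :
    u ⬝ᵥ (((1 / 2 : ℝ) • (M + Mᵀ)) *ᵥ u) = u ⬝ᵥ (M *ᵥ u) := by
  rw [smul_mulVec, add_mulVec, mulVec_transpose, dotProduct_smul, dotProduct_add,
    dotProduct_comm u (u ᵥ* M), ← dotProduct_mulVec, smul_eq_mul]
  ring

variable {ι : Type*} [Fintype ι] [DecidableEq ι]

def laplacian (A : Matrix ι ι ℝ) : Matrix ι ι ℝ := diagonal (fun i => ∑ j, A i j) - A

variable {A : Matrix ι ι ℝ}

lemma laplacian_mulVec_apply (u : ι → ℝ) (i : ι) :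
    (laplacian A *ᵥ u) i = ∑ j, A i j * (u i - u j) := by
  rw [laplacian, sub_mulVec, Pi.sub_apply, mulVec_diagonal, Finset.sum_mul]
  simp [mulVec, dotProduct, mul_sub]

lemma laplacian_mulVec_const (c : ℝ) : laplacian A *ᵥ (fun _ => c) = 0 := by
  ext i; simp [laplacian_mulVec_apply]

lemma sum_laplacian_mulVec (hbal : ∀ i, ∑ j, A i j = ∑ j, A j i) (u : ι → ℝ) :
    ∑ i, (laplacian A *ᵥ u) i = 0 := by
  simp only [laplacian_mulVec_apply, mul_sub, Finset.sum_sub_distrib, ← Finset.sum_mul, hbal]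
  rw [Finset.sum_comm]
  simp [Finset.sum_mul]

lemma dotProduct_laplacian_mulVec (hbal : ∀ i, ∑ j, A i j = ∑ j, A j i) (u : ι → ℝ) :
    u ⬝ᵥ (laplacian A *ᵥ u) = (∑ i, ∑ j, A i j * (u i - u j) ^ 2) / 2 := by
  have hsq := sum_laplacian_mulVec hbal (u ^ 2)
  simp only [laplacian_mulVec_apply, Pi.pow_apply] at hsq
  simp only [dotProduct, laplacian_mulVec_apply, Finset.mul_sum]
  rw [eq_div_iff two_ne_zero, Finset.sum_mul, ← sub_eq_zero, ← Finset.sum_sub_distrib, ← hsq]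
  refine Finset.sum_congr rfl fun i _ => ?_
  rw [Finset.sum_mul, ← Finset.sum_sub_distrib]
  exact Finset.sum_congr rfl fun j _ => by ring

lemma dotProduct_laplacian_mulVec_nonneg (hA : ∀ i j, 0 ≤ A i j)
    (hbal : ∀ i, ∑ j, A i j = ∑ j, A j i) (u : ι → ℝ) : 0 ≤ u ⬝ᵥ (laplacian A *ᵥ u) := by
  rw [dotProduct_laplacian_mulVec hbal]
  exact div_nonneg (Finset.sum_nonneg fun i _ => Finset.sum_nonneg fun j _ =>
    mul_nonneg (hA i j) (sq_nonneg _)) zero_le_two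

lemma eq_of_dotProduct_laplacian_mulVec_eq_zero (hA : ∀ i j, 0 ≤ A i j)
    (hbal : ∀ i, ∑ j, A i j = ∑ j, A j i)
    (hconn : ∀ i j, Relation.ReflTransGen (fun a b => A a b ≠ 0 ∨ A b a ≠ 0) i j)
    {u : ι → ℝ} (hu : u ⬝ᵥ (laplacian A *ᵥ u) = 0) (i j : ι) : u i = u j := by
  have hterm : ∀ i j, A i j * (u i - u j) ^ 2 = 0 := by
    have hnonneg : ∀ i j, 0 ≤ A i j * (u i - u j) ^ 2 := fun i j =>
      mul_nonneg (hA i j) (sq_nonneg _)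
    rw [dotProduct_laplacian_mulVec hbal, div_eq_zero_iff, or_iff_left two_ne_zero,
      Finset.sum_eq_zero_iff_of_nonneg fun i _ => Finset.sum_nonneg fun j _ => hnonneg i j] at hu
    exact fun i j => (Finset.sum_eq_zero_iff_of_nonneg fun j _ => hnonneg i j).1
      (hu i (Finset.mem_univ _)) j (Finset.mem_univ _)
  have hadj : ∀ a b, A a b ≠ 0 → u a = u b := fun a b hab => by
    simpa [sub_eq_zero, hab] using hterm a b
  induction hconn i j with
  | refl => rfl
  | tail _ hstep ih =>
    exact hstep.elim (fun h => ih.trans (hadj _ _ h)) fun h => ih.trans (hadj _ _ h).symm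

lemma pos_of_half_smul_add_transpose_laplacian_mulVec_eq_smul (hA : ∀ i j, 0 ≤ A i j)
    (hbal : ∀ i, ∑ j, A i j = ∑ j, A j i) {μ : ℝ} (hμ : μ ≠ 0) {v : ι → ℝ} (hv : v ≠ 0)
    (h : ((1 / 2 : ℝ) • (laplacian A + (laplacian A)ᵀ)) *ᵥ v = μ • v) : 0 < μ := by
  have hform : μ * (v ⬝ᵥ v) = v ⬝ᵥ (laplacian A *ᵥ v) := by
    rw [← dotProduct_half_smul_add_transpose_mulVec, h, dotProduct_smul, smul_eq_mul]
  have hvv : 0 < v ⬝ᵥ v := by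
    simpa using dotProduct_star_self_pos_iff.2 hv
  have : 0 ≤ μ := nonneg_of_mul_nonneg_left
    (hform ▸ dotProduct_laplacian_mulVec_nonneg hA hbal v) hvv
  exact lt_of_le_of_ne this (Ne.symm hμ)

lemma mul_dotProduct_self_le_dotProduct_laplacian_mulVec (hA : ∀ i j, 0 ≤ A i j)
    (hbal : ∀ i, ∑ j, A i j = ∑ j, A j i)
    (hconn : ∀ i j, Relation.ReflTransGen (fun a b => A a b ≠ 0 ∨ A b a ≠ 0) i j) {lam : ℝ}
    (hlam : lam ∈ lowerBounds {μ : ℝ | μ ≠ 0 ∧ ∃ v : ι → ℝ, v ≠ 0 ∧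
      ((1 / 2 : ℝ) • (laplacian A + (laplacian A)ᵀ)) *ᵥ v = μ • v})
    {u : ι → ℝ} (hu : ∑ i, u i = 0) : lam * (u ⬝ᵥ u) ≤ u ⬝ᵥ (laplacian A *ᵥ u) := by
  rw [← dotProduct_half_smul_add_transpose_mulVec]
  refine (isHermitian_half_smul_add_transpose _).mul_dotProduct_self_le_dotProduct_mulVec hlam
    fun v hv => ?_
  have hconst : ∀ i j, v i = v j := eq_of_dotProduct_laplacian_mulVec_eq_zero hA hbal hconn
    (by rw [← dotProduct_half_smul_add_transpose_mulVec, hv, dotProduct_zero])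
  rcases isEmpty_or_nonempty ι with hι | ⟨⟨i₀⟩⟩
  · simp [dotProduct]
  · simp [dotProduct, hconst _ i₀, ← Finset.mul_sum, hu]

end Matrix

noncomputable def deviation {N : ℕ} (v : Fin N → ℝ) : Fin N → ℝ := fun i => v i - (∑ j, v j) / N

lemma sum_deviation {N : ℕ} (v : Fin N → ℝ) : ∑ i, deviation v i = 0 := by
  rcases Nat.eq_zero_or_pos N with rfl | hN
  · simp
  · have hN' : (N : ℝ) ≠ 0 := Nat.cast_ne_zero.2 hN.ne'
    simp [deviation, Finset.sum_sub_distrib, mul_div_cancel₀ _ hN']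

lemma deviation_dotProduct_deviation {N : ℕ} (u w : Fin N → ℝ) :
    deviation u ⬝ᵥ deviation w = deviation u ⬝ᵥ w := by
  have hw : deviation w = w - fun _ => (∑ j, w j) / N := rfl
  rw [hw, dotProduct_sub, sub_eq_self]
  simp [dotProduct, ← Finset.sum_mul, sum_deviation]

lemma HasDerivAt.deviation {N : ℕ} {x : ℝ → Fin N → ℝ} {x' : Fin N → ℝ} {t : ℝ}
    (hx : HasDerivAt x x' t) : HasDerivAt (fun s => deviation (x s)) (deviation x') t := by
  refine hasDerivAt_pi.2 fun i => ?_
  have hcoord : ∀ j, HasDerivAt (fun s => x s j) (x' j) t := hasDerivAt_pi.1 hx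
  exact (hcoord i).sub ((HasDerivAt.fun_sum fun j _ => hcoord j).div_const _)

lemma HasDerivAt.half_sum_sq {ι : Type*} [Fintype ι] {f : ℝ → ι → ℝ} {f' : ι → ℝ} {t : ℝ}
    (hf : HasDerivAt f f' t) :
    HasDerivAt (fun s => 1 / 2 * ∑ i, f s i ^ 2) (f t ⬝ᵥ f') t := by
  refine ((HasDerivAt.fun_sum (u := Finset.univ) fun i _ =>
    (hasDerivAt_pi.1 hf i).fun_pow 2).const_mul (1 / 2 : ℝ)).congr_deriv ?_
  rw [dotProduct, Finset.mul_sum]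
  exact Finset.sum_congr rfl fun i _ => by push_cast; ring

lemma hasDerivAt_half_sum_sq_deviation {N : ℕ} {x : ℝ → Fin N → ℝ} {x' : Fin N → ℝ} {t : ℝ}
    (hx : HasDerivAt x x' t) :
    HasDerivAt (fun s => 1 / 2 * ∑ i, deviation (x s) i ^ 2) (deviation (x t) ⬝ᵥ x') t :=
  deviation_dotProduct_deviation (x t) x' ▸ hx.deviation.half_sum_sq

lemma deviation_dotProduct_neg_mulVec_le {N : ℕ} {L : Matrix (Fin N) (Fin N) ℝ}
    {lam CL ρ : ℝ} (hlam : 0 < lam) (hCL₀ : 0 ≤ CL)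
    (hspec : ∀ u : Fin N → ℝ, ∑ i, u i = 0 → lam * (u ⬝ᵥ u) ≤ u ⬝ᵥ (L *ᵥ u))
    (hCL : ∀ v, en (L *ᵥ v) ≤ CL * en v) (hconst : ∀ c : ℝ, L *ᵥ (fun _ => c) = 0)
    {x v : Fin N → ℝ} (hv : en (v - x) ≤ ρ) :
    deviation x ⬝ᵥ -(L *ᵥ v) ≤ -(lam * en (deviation x) * (en (deviation x) - CL / lam * ρ)) := by
  set y := deviation x
  have hsplit : L *ᵥ v = L *ᵥ y + L *ᵥ (v - x) := by
    have : v = y + (v - x) + fun _ => (∑ j, x j) / N := by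
      ext i; simp [y, deviation]
    conv_lhs => rw [this]
    rw [Matrix.mulVec_add, Matrix.mulVec_add, hconst, add_zero]
  have hquad : lam * en y ^ 2 ≤ y ⬝ᵥ (L *ᵥ y) := en_sq y ▸ hspec y (sum_deviation x)
  have hcross : |y ⬝ᵥ (L *ᵥ (v - x))| ≤ en y * (CL * ρ) :=
    (abs_dotProduct_le_en_mul_en _ _).trans (mul_le_mul_of_nonneg_left
      ((hCL _).trans (mul_le_mul_of_nonneg_left hv hCL₀)) (en_nonneg _))
  have hrhs : -(lam * en y * (en y - CL / lam * ρ)) = -(lam * en y ^ 2) + en y * (CL * ρ) := by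
    field_simp
    ring
  rw [hsplit, dotProduct_neg, dotProduct_add, hrhs]
  linarith [(abs_le.1 hcross).1]

lemma deviation_dotProduct_neg_laplacian_mulVec_le {N : ℕ} {A : Matrix (Fin N) (Fin N) ℝ}
    (hA : ∀ i j, 0 ≤ A i j) (hbal : ∀ i, ∑ j, A i j = ∑ j, A j i)
    (hconn : ∀ i j, Relation.ReflTransGen (fun a b => A a b ≠ 0 ∨ A b a ≠ 0) i j)
    {lam2 CL Δ : ℝ} (hlam2 : 0 < lam2)
    (hlam2_le : lam2 ∈ lowerBounds {μ : ℝ | μ ≠ 0 ∧ ∃ v : Fin N → ℝ, v ≠ 0 ∧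
      ((1 / 2 : ℝ) • (laplacian A + (laplacian A)ᵀ)) *ᵥ v = μ • v})
    (hCL₀ : 0 ≤ CL) (hCL : ∀ v, en (laplacian A *ᵥ v) ≤ CL * en v) (hΔ : 0 < Δ)
    {x v : Fin N → ℝ} (hv : v ∈ kras (fun y i => qd Δ (y i)) x) :
    deviation x ⬝ᵥ -(laplacian A *ᵥ v) ≤
      -(lam2 * en (deviation x) * (en (deviation x) - CL / lam2 * (Δ / 2) * Real.sqrt N)) := by
  convert deviation_dotProduct_neg_mulVec_le hlam2 hCL₀
    (fun u hu => mul_dotProduct_self_le_dotProduct_laplacian_mulVec hA hbal hconn hlam2_le hu)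
    hCL laplacian_mulVec_const (en_sub_le_of_mem_kras_qd hΔ hv) using 4
  ring

namespace AbsolutelyContinuousOnInterval

variable {a b : ℝ}

theorem congr {X : Type*} [PseudoMetricSpace X] {f g : ℝ → X}
    (hf : AbsolutelyContinuousOnInterval f a b) (hfg : EqOn f g (uIcc a b)) :
    AbsolutelyContinuousOnInterval g a b := by
  refine Tendsto.congr' (eventually_inf_principal.2 (Eventually.of_forall fun E hE => ?_)) hf
  exact Finset.sum_congr rfl fun i hi => by rw [hfg (hE.1 i hi).1, hfg (hE.1 i hi).2]

theorem const {X : Type*} [PseudoMetricSpace X] (c : X) :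
    AbsolutelyContinuousOnInterval (fun _ => c) a b := by
  simpa [AbsolutelyContinuousOnInterval] using tendsto_const_nhds

theorem finset_sum {F : Type*} [NormedAddCommGroup F] {ι : Type*} (s : Finset ι)
    {f : ι → ℝ → F} (hf : ∀ i ∈ s, AbsolutelyContinuousOnInterval (f i) a b) :
    AbsolutelyContinuousOnInterval (fun x => ∑ i ∈ s, f i x) a b := by
  classical
  induction s using Finset.induction_on with
  | empty => simpa using const 0
  | insert i s hi ih =>
    simp_rw [Finset.sum_insert hi]
    exact (hf i (mem_insert_self i s)).fun_add (ih fun j hj => hf j (mem_insert_of_mem hj))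

theorem sub_le_mul_of_ae_deriv_le {f : ℝ → ℝ} {C : ℝ} (hab : a ≤ b)
    (hf : AbsolutelyContinuousOnInterval f a b) (hC : ∀ᵐ t, t ∈ Ioc a b → deriv f t ≤ C) :
    f b - f a ≤ C * (b - a) := by
  rw [← hf.integral_deriv_eq_sub, intervalIntegral.integral_of_le hab]
  calc ∫ t in Ioc a b, deriv f t ≤ ∫ _ in Ioc a b, C :=
        setIntegral_mono_ae_restrict
          ((intervalIntegrable_iff_integrableOn_Ioc_of_le hab).1 hf.intervalIntegrable_deriv)
          (integrableOn_const (by simp)) ((ae_restrict_iff' measurableSet_Ioc).2 hC)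
    _ = C * (b - a) := by simp [Real.volume_real_Ioc_of_le hab, mul_comm]

end AbsolutelyContinuousOnInterval

theorem le_max_of_ae_deriv_le {f : ℝ → ℝ} {a c κ : ℝ} (hκ : 0 ≤ κ)
    (hf : ∀ b, a ≤ b → AbsolutelyContinuousOnInterval f a b)
    (hderiv : ∀ᵐ t, a < t → c < f t → deriv f t ≤ -κ) {t : ℝ} (ht : a ≤ t) :
    f t ≤ max c (f a - κ * (t - a)) := by
  set g : ℝ → ℝ := fun s => max c (f a - κ * (s - a))
  set K := {s ∈ Icc a t | f s ≤ g s}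
  have hfc : ContinuousOn f (Icc a t) := by simpa [uIcc_of_le ht] using (hf t ht).continuousOn
  have hK : IsCompact K := isCompact_Icc.of_isClosed_subset
    (isClosed_Icc.isClosed_le hfc (by fun_prop)) (sep_subset _ _)
  have haK : a ∈ K := ⟨left_mem_Icc.2 ht, by simp [g]⟩
  -- `s` is the last time at which `f` is below the envelope `g`; after it `f > c`, so `f`
  -- decays at rate `κ` on `(s, t]` and ends below `g t` after all.
  obtain ⟨⟨hsa, hst⟩, hsK⟩ : sSup K ∈ K := hK.sSup_mem ⟨a, haK⟩
  set s := sSup K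
  suffices s = t by rwa [this] at hsK
  by_contra hne
  have hlt : s < t := lt_of_le_of_ne hst hne
  have habove : ∀ r ∈ Ioc s t, g r < f r := fun r hr => by
    by_contra! hle
    exact absurd (le_csSup hK.bddAbove ⟨⟨hsa.trans hr.1.le, hr.2⟩, hle⟩) (not_le.2 hr.1)
  have hdecay : f t - f s ≤ -κ * (t - s) :=
    ((hf t ht).mono (by simp [uIcc_of_le ht, uIcc_of_le hst, Icc_subset_Icc_left hsa])
      ).sub_le_mul_of_ae_deriv_le hst (by
        filter_upwards [hderiv] with r hr hrI
        exact hr (hsa.trans_lt hrI.1) ((le_max_left _ _).trans_lt (habove r hrI)))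
  have : f t ≤ g t := by
    simp only [g] at hsK ⊢
    have hκts : 0 ≤ κ * (t - s) := mul_nonneg hκ (sub_nonneg.2 hst)
    rcases le_max_iff.1 hsK with h | h
    · exact le_max_of_le_left (by linarith)
    · exact le_max_of_le_right (by linarith)
  exact absurd (habove t ⟨hlt, le_rfl⟩) (not_lt.2 this)

theorem eventually_le_of_ae_deriv_le {f : ℝ → ℝ} {a c κ : ℝ} (hκ : 0 < κ)
    (hf : ∀ b, a ≤ b → AbsolutelyContinuousOnInterval f a b)
    (hderiv : ∀ᵐ t, a < t → c < f t → deriv f t ≤ -κ) : ∀ᶠ t in atTop, f t ≤ c := by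
  filter_upwards [eventually_ge_atTop a, eventually_ge_atTop (a + (f a - c) / κ)] with t ha hc
  refine (le_max_of_ae_deriv_le hκ.le hf hderiv ha).trans (max_le le_rfl ?_)
  have : f a - c ≤ κ * (t - a) := by rw [← div_le_iff₀' hκ]; linarith
  linarith

lemma IntervalIntegrable.eval {ι : Type*} [Fintype ι] {f : ℝ → ι → ℝ} {a b : ℝ}
    (hf : IntervalIntegrable f volume a b) (i : ι) :
    IntervalIntegrable (fun s => f s i) volume a b :=
  ⟨hf.1.eval i, hf.2.eval i⟩

lemma intervalIntegral.eval_integral {ι : Type*} [Fintype ι] {f : ℝ → ι → ℝ} {a b : ℝ}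
    (hf : IntervalIntegrable f volume a b) (i : ι) :
    (∫ s in a..b, f s) i = ∫ s in a..b, f s i := by
  simp [intervalIntegral, MeasureTheory.eval_integral fun j => hf.1.eval j,
    MeasureTheory.eval_integral fun j => hf.2.eval j]

section Solution

variable {N : ℕ} {x x' : ℝ → Fin N → ℝ}

lemma apply_eq_add_intervalIntegral (hint : ∀ t, 0 ≤ t → IntervalIntegrable x' volume 0 t)
    (hsol : ∀ t, 0 ≤ t → x t = x 0 + ∫ s in (0 : ℝ)..t, x' s) {t : ℝ} (ht : 0 ≤ t) (i : Fin N) :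
    x t i = x 0 i + ∫ s in (0 : ℝ)..t, x' s i := by
  rw [hsol t ht, Pi.add_apply, intervalIntegral.eval_integral (hint t ht)]

lemma sum_apply_eq_of_ae_sum_eq_zero (hint : ∀ t, 0 ≤ t → IntervalIntegrable x' volume 0 t)
    (hsol : ∀ t, 0 ≤ t → x t = x 0 + ∫ s in (0 : ℝ)..t, x' s)
    (hsum : ∀ᵐ s, 0 ≤ s → ∑ i, x' s i = 0) {t : ℝ} (ht : 0 ≤ t) :
    ∑ i, x t i = ∑ i, x 0 i := by
  simp_rw [apply_eq_add_intervalIntegral hint hsol ht, Finset.sum_add_distrib,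
    ← intervalIntegral.integral_finsetSum fun i _ => (hint t ht).eval i, add_eq_left]
  rw [intervalIntegral.integral_of_le ht]
  refine integral_eq_zero_of_ae ((ae_restrict_iff' measurableSet_Ioc).2 ?_)
  filter_upwards [hsum] with s hs hsI using hs hsI.1.le

lemma absolutelyContinuousOnInterval_apply
    (hint : ∀ t, 0 ≤ t → IntervalIntegrable x' volume 0 t)
    (hsol : ∀ t, 0 ≤ t → x t = x 0 + ∫ s in (0 : ℝ)..t, x' s) {b : ℝ} (hb : 0 ≤ b) (i : Fin N) :
    AbsolutelyContinuousOnInterval (fun s => x s i) 0 b := by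
  refine ((AbsolutelyContinuousOnInterval.const (x 0 i)).fun_add
    (((hint b hb).eval i).absolutelyContinuousOnInterval_intervalIntegral
      (left_mem_uIcc (a := 0) (b := b)))).congr fun s hs => ?_
  rw [uIcc_of_le hb] at hs
  exact (apply_eq_add_intervalIntegral hint hsol hs.1 i).symm

end Solution

lemma AbsolutelyContinuousOnInterval.half_sum_sq_deviation {N : ℕ} {x : ℝ → Fin N → ℝ}
    {a b : ℝ} (hx : ∀ i, AbsolutelyContinuousOnInterval (fun s => x s i) a b) :
    AbsolutelyContinuousOnInterval (fun s => 1 / 2 * ∑ i, deviation (x s) i ^ 2) a b := by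
  have hmean : AbsolutelyContinuousOnInterval (fun s => (∑ j, x s j) / N) a b := by
    simpa only [div_eq_inv_mul] using
      (AbsolutelyContinuousOnInterval.finset_sum _ fun j _ => hx j).const_mul (N : ℝ)⁻¹
  have hdev : ∀ i, AbsolutelyContinuousOnInterval (fun s => deviation (x s) i) a b :=
    fun i => (hx i).fun_sub hmean
  simpa only [sq] using
    (AbsolutelyContinuousOnInterval.finset_sum _ fun i _ => (hdev i).fun_mul (hdev i)).const_mul
      (1 / 2)

theorem eventually_en_le_of_hasDerivAt_le {N : ℕ} {y : ℝ → Fin N → ℝ} {W : ℝ → ℝ}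
    {lam ρ δ : ℝ} (hlam : 0 < lam) (hρ : 0 ≤ ρ) (hδ : 0 < δ)
    (hAC : ∀ b, 0 ≤ b →
      AbsolutelyContinuousOnInterval (fun s => 1 / 2 * ∑ i, y s i ^ 2) 0 b)
    (hW : ∀ᵐ t, 0 ≤ t → HasDerivAt (fun s => 1 / 2 * ∑ i, y s i ^ 2) (W t) t ∧
      W t ≤ -(lam * en (y t) * (en (y t) - ρ))) :
    ∀ᶠ t in atTop, en (y t) ≤ ρ + δ := by
  have hV : ∀ s, 1 / 2 * ∑ i, y s i ^ 2 = en (y s) ^ 2 / 2 := fun s => by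
    rw [en_sq, dotProduct]; simp only [sq]; ring
  have hlevel := eventually_le_of_ae_deriv_le (c := (ρ + δ) ^ 2 / 2)
    (by positivity : 0 < lam * (ρ + δ) * δ) hAC ?_
  · filter_upwards [hlevel] with t ht
    rw [hV] at ht
    exact (pow_le_pow_iff_left₀ (en_nonneg _) (by positivity) two_ne_zero).1 (by linarith)
  · filter_upwards [hW] with t hWt ht hlev
    obtain ⟨hderiv, hbound⟩ := hWt ht.le
    rw [hV] at hlev
    have hen : ρ + δ < en (y t) := lt_of_pow_lt_pow_left₀ 2 (en_nonneg _) (by linarith)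
    rw [hderiv.deriv]
    refine hbound.trans (neg_le_neg (mul_le_mul (by gcongr) (by linarith) hδ.le ?_))
    exact mul_nonneg hlam.le (en_nonneg _)

theorem krasowskii_convergence_general (N : ℕ) (Δ : ℝ) (hΔ : 0 < Δ)
    (A : Matrix (Fin N) (Fin N) ℝ)
    (hA : ∀ i j, 0 ≤ A i j)
    (hbal : ∀ i, ∑ j, A i j = ∑ j, A j i)
    (hconn : ∀ i j : Fin N,
      Relation.ReflTransGen (fun a b => A a b ≠ 0 ∨ A b a ≠ 0) i j)
    (L : Matrix (Fin N) (Fin N) ℝ)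
    (hL : L = (Matrix.diagonal fun i => ∑ j, A i j) - A)
    (S : Matrix (Fin N) (Fin N) ℝ) (hS : S = (1 / 2 : ℝ) • (L + Lᵀ))
    (lam2 : ℝ)
    (hlam : IsLeast {μ : ℝ | μ ≠ 0 ∧ ∃ v : Fin N → ℝ, v ≠ 0 ∧ S.mulVec v = μ • v} lam2)
    (CL : ℝ)
    (hCL : IsLeast {c : ℝ | 0 ≤ c ∧ ∀ v : Fin N → ℝ, en (L.mulVec v) ≤ c * en v} CL)
    (x x' : ℝ → Fin N → ℝ)
    (hmem : ∀ᵐ t ∂volume, 0 ≤ t →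
      x' t ∈ (fun v => -(L.mulVec v)) '' kras (fun y i => qd Δ (y i)) (x t))
    (hderiv : ∀ᵐ t ∂volume, 0 ≤ t → HasDerivAt x (x' t) t)
    (hint : ∀ t, 0 ≤ t → IntervalIntegrable x' volume 0 t)
    (hsol : ∀ t, 0 ≤ t → x t = x 0 + ∫ s in (0 : ℝ)..t, x' s)
    (y : ℝ → Fin N → ℝ)
    (hy : ∀ t, y t = fun i => x t i - (∑ j, x t j) / N) :
    (∃ W : ℝ → ℝ, ∀ᵐ t ∂volume, 0 ≤ t →
      HasDerivAt (fun s => (1 / 2) * ∑ i, (y s i) ^ 2) (W t) t ∧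
      W t ≤ -(lam2 * en (y t) * (en (y t) - CL / lam2 * (Δ / 2) * Real.sqrt N))) ∧
    (∀ ε > (0 : ℝ), ∃ T : ℝ, ∀ t, T ≤ t →
      en (fun i => x t i - (∑ j, x 0 j) / N) / Real.sqrt N
        ≤ CL / lam2 * (Δ / 2) + ε) := by
  obtain rfl : y = fun t => deviation (x t) := funext hy
  obtain rfl : L = laplacian A := hL
  subst hS
  obtain ⟨⟨hlam2₀, v₂, hv₂, hv₂S⟩, hlam2_le⟩ := hlam
  obtain ⟨⟨hCL₀, hCL⟩, -⟩ := hCL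
  have hN : 0 < N := Nat.pos_of_ne_zero fun h => hv₂ (by subst h; exact Subsingleton.elim _ _)
  have hlam2 : 0 < lam2 :=
    pos_of_half_smul_add_transpose_laplacian_mulVec_eq_smul hA hbal hlam2₀ hv₂ hv₂S
  have hW : ∀ᵐ t, 0 ≤ t →
      HasDerivAt (fun s => 1 / 2 * ∑ i, deviation (x s) i ^ 2) (deviation (x t) ⬝ᵥ x' t) t ∧
      deviation (x t) ⬝ᵥ x' t ≤ -(lam2 * en (deviation (x t)) *
        (en (deviation (x t)) - CL / lam2 * (Δ / 2) * Real.sqrt N)) := by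
    filter_upwards [hmem, hderiv] with t hmem hderiv ht
    obtain ⟨v, hv, hx'⟩ := hmem ht
    exact ⟨hasDerivAt_half_sum_sq_deviation (hderiv ht), hx' ▸
      deviation_dotProduct_neg_laplacian_mulVec_le hA hbal hconn hlam2 hlam2_le hCL₀ hCL hΔ hv⟩
  refine ⟨⟨_, hW⟩, fun ε hε => ?_⟩
  have hsqrtN : 0 < Real.sqrt N := Real.sqrt_pos.2 (Nat.cast_pos.2 hN)
  have hconserved : ∀ t, 0 ≤ t → ∑ i, x t i = ∑ i, x 0 i := fun t =>
    sum_apply_eq_of_ae_sum_eq_zero hint hsol (by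
      filter_upwards [hmem] with s hs hs₀
      obtain ⟨v, -, hx'⟩ := hs hs₀
      simp [← hx', sum_laplacian_mulVec hbal])
  obtain ⟨T, hT⟩ := eventually_atTop.1 ((eventually_en_le_of_hasDerivAt_le hlam2
    (by positivity) (mul_pos hε hsqrtN)
    (fun b hb => AbsolutelyContinuousOnInterval.half_sum_sq_deviation
      (absolutelyContinuousOnInterval_apply hint hsol hb)) hW).and (eventually_ge_atTop 0))
  refine ⟨T, fun t ht => ?_⟩
  obtain ⟨hen, ht₀⟩ := hT t ht
  rw [← hconserved t ht₀, div_le_iff₀ hsqrtN]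
  change en (deviation (x t)) ≤ _
  linarith

/-- along any Krasowskii solution of `ẋ ∈ −L·K(q_Δ)(x)` the
deviation `y = x − x_ave 𝟙` satisfies, for a.e. `t ≥ 0`, the Lyapunov decay
`d/dt (½‖y‖²) ≤ −λ₂(Sym L)·‖y‖·(‖y‖ − (‖L‖/λ₂(Sym L))·(Δ/2)·√N)`, and
consequently `x(t)` converges to the set
`M = {x : (1/√N)‖x − x_ave(0)𝟙‖ ≤ (‖L‖/λ₂(Sym L))·Δ/2}`. -/
theorem krasowskii_convergence (N : ℕ) (Δ : ℝ) (hΔ : 0 < Δ)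
    (A : Matrix (Fin N) (Fin N) ℝ)
    (hA : ∀ i j, 0 ≤ A i j) (hdiag : ∀ i, A i i = 0)
    (hbal : ∀ i, ∑ j, A i j = ∑ j, A j i)
    (hconn : ∀ i j : Fin N,
      Relation.ReflTransGen (fun a b => A a b ≠ 0 ∨ A b a ≠ 0) i j)
    (L : Matrix (Fin N) (Fin N) ℝ)
    (hL : L = (Matrix.diagonal fun i => ∑ j, A i j) - A)
    (S : Matrix (Fin N) (Fin N) ℝ) (hS : S = (1 / 2 : ℝ) • (L + Lᵀ))
    (lam2 : ℝ)
    (hlam : IsLeast {μ : ℝ | μ ≠ 0 ∧ ∃ v : Fin N → ℝ, v ≠ 0 ∧ S.mulVec v = μ • v} lam2)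
    (CL : ℝ)
    (hCL : IsLeast {c : ℝ | 0 ≤ c ∧ ∀ v : Fin N → ℝ, en (L.mulVec v) ≤ c * en v} CL)
    (x x' : ℝ → Fin N → ℝ)
    (hmem : ∀ᵐ t ∂volume, 0 ≤ t →
      x' t ∈ (fun v => -(L.mulVec v)) '' kras (fun y i => qd Δ (y i)) (x t))
    (hderiv : ∀ᵐ t ∂volume, 0 ≤ t → HasDerivAt x (x' t) t)
    (hint : ∀ t, 0 ≤ t → IntervalIntegrable x' volume 0 t)
    (hsol : ∀ t, 0 ≤ t → x t = x 0 + ∫ s in (0 : ℝ)..t, x' s)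
    (y : ℝ → Fin N → ℝ)
    (hy : ∀ t, y t = fun i => x t i - (∑ j, x t j) / N) :
    (∃ W : ℝ → ℝ, ∀ᵐ t ∂volume, 0 ≤ t →
      HasDerivAt (fun s => (1 / 2) * ∑ i, (y s i) ^ 2) (W t) t ∧
      W t ≤ -(lam2 * en (y t) * (en (y t) - CL / lam2 * (Δ / 2) * Real.sqrt N))) ∧
    (∀ ε > (0 : ℝ), ∃ T : ℝ, ∀ t, T ≤ t →
      en (fun i => x t i - (∑ j, x 0 j) / N) / Real.sqrt N
        ≤ CL / lam2 * (Δ / 2) + ε) :=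
  krasowskii_convergence_general N Δ hΔ A hA hbal hconn L hL S hS lam2 hlam CL hCL x x' hmem hderiv
    hint hsol y hy
end

section
/- The set of Krasowskii equilibria of ẋ = −L q_Δ(x) equals the closure of D = {x ∈ ℝ^N : ∃k ∈ ℤ such that q_Δ(x_i) = kΔ for all i}, i.e., the set of x for which there exists k ∈ ℤ with (k − 1/2)Δ ≤ x_i ≤ (k + 1/2)Δ for all i. That is, 0 ∈ −L·K(q_Δ)(x₀) if and only if x₀ ∈ closure(D). -/
open Matrix

lemma qd_eq_of_Ico (Δ : ℝ) (hΔ : 0 < Δ) (k : ℤ) (z : ℝ)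
    (h1 : ((k : ℝ) - 1/2) * Δ ≤ z) (h2 : z < ((k : ℝ) + 1/2) * Δ) : qd Δ z = k * Δ := by
  unfold qd
  have hfl : ⌊z / Δ + 1 / 2⌋ = k := by
    rw [Int.floor_eq_iff]
    constructor
    · have : (k : ℝ) - 1/2 ≤ z / Δ := by rw [le_div_iff₀ hΔ]; linarith
      linarith
    · have : z / Δ < (k : ℝ) + 1/2 := by rw [div_lt_iff₀ hΔ]; linarith
      linarith
  rw [hfl]

lemma qd_local (Δ : ℝ) (hΔ : 0 < Δ) (x : ℝ) :
    ∃ δ : ℝ, ∃ m M : ℤ, 0 < δ ∧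
      (∀ y : ℝ, |y - x| < δ → (m : ℝ) * Δ ≤ qd Δ y ∧ qd Δ y ≤ (M : ℝ) * Δ) ∧
      (∀ k : ℤ, m ≤ k → k ≤ M →
        ((k : ℝ) - 1/2) * Δ ≤ x ∧ x ≤ ((k : ℝ) + 1/2) * Δ) := by
  set t : ℝ := x / Δ + 1 / 2 with ht
  set k₀ : ℤ := ⌊t⌋ with hk₀
  have htlow : (k₀ : ℝ) ≤ t := Int.floor_le t
  have hthigh : t < (k₀ : ℝ) + 1 := Int.lt_floor_add_one t
  by_cases hcase : (k₀ : ℝ) = t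
  · -- x is at a discontinuity point: x = (k₀ - 1/2) Δ
    have hx : x = ((k₀ : ℝ) - 1/2) * Δ := by
      have : (k₀ : ℝ) = x / Δ + 1/2 := hcase
      field_simp at this
      linarith
    refine ⟨Δ / 2, k₀ - 1, k₀, by linarith, ?_, ?_⟩
    · intro y hy
      obtain ⟨hy1, hy2⟩ := abs_lt.mp hy
      have hd1 : (y - x)/Δ < 1/2 := by rw [div_lt_iff₀ hΔ]; nlinarith
      have hd2 : -(1/2) < (y - x)/Δ := by
        rw [lt_div_iff₀ hΔ]; nlinarith
      have hyΔ : y / Δ = x / Δ + (y - x)/Δ := by ring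
      have hu1 : ((k₀ - 1 : ℤ) : ℝ) ≤ y / Δ + 1/2 := by
        push_cast
        rw [hyΔ]
        have := hcase
        rw [ht] at this
        linarith
      have hu2 : y / Δ + 1/2 < ((k₀ + 1 : ℤ) : ℝ) := by
        push_cast
        rw [hyΔ]
        have := hcase
        rw [ht] at this
        linarith
      have hfl1 : k₀ - 1 ≤ ⌊y / Δ + 1/2⌋ := Int.le_floor.mpr hu1
      have hfl2 : ⌊y / Δ + 1/2⌋ ≤ k₀ := by
        have := Int.floor_lt.mpr hu2
        omega
      unfold qd
      constructor
      · have : ((k₀ - 1 : ℤ) : ℝ) ≤ (⌊y / Δ + 1/2⌋ : ℝ) := Int.cast_le.mpr hfl1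
        push_cast at this ⊢
        nlinarith
      · have : ((⌊y / Δ + 1/2⌋ : ℤ) : ℝ) ≤ (k₀ : ℝ) := Int.cast_le.mpr hfl2
        nlinarith
    · intro k hk1 hk2
      have h1 : ((k : ℝ)) ≤ (k₀ : ℝ) := Int.cast_le.mpr hk2
      have h2 : ((k₀ - 1 : ℤ) : ℝ) ≤ (k : ℝ) := Int.cast_le.mpr hk1
      push_cast at h2
      constructor
      · rw [hx]; nlinarith
      · rw [hx]; nlinarith
  · -- x is not at a discontinuity point
    have htlow' : (k₀ : ℝ) < t := lt_of_le_of_ne htlow hcase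
    refine ⟨min (Δ * (t - k₀)) (Δ * ((k₀ : ℝ) + 1 - t)), k₀, k₀, ?_, ?_, ?_⟩
    · exact lt_min (mul_pos hΔ (by linarith)) (mul_pos hΔ (by linarith))
    · intro y hy
      have hy1 : |y - x| < Δ * (t - k₀) := lt_of_lt_of_le hy (min_le_left _ _)
      have hy2 : |y - x| < Δ * ((k₀ : ℝ) + 1 - t) := lt_of_lt_of_le hy (min_le_right _ _)
      obtain ⟨ha1, hb1⟩ := abs_lt.mp hy1
      obtain ⟨ha2, hb2⟩ := abs_lt.mp hy2
      have hyΔ : y / Δ = x / Δ + (y - x)/Δ := by ring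
      have hd1 : (y - x)/Δ < (k₀ : ℝ) + 1 - t := by rw [div_lt_iff₀ hΔ]; nlinarith
      have hd2 : -(t - (k₀ : ℝ)) < (y - x)/Δ := by
        rw [lt_div_iff₀ hΔ]; nlinarith
      have hfl : ⌊y / Δ + 1/2⌋ = k₀ := by
        rw [Int.floor_eq_iff]
        constructor
        · rw [hyΔ]; rw [ht] at *; linarith
        · push_cast; rw [hyΔ]; rw [ht] at *; linarith
      unfold qd
      rw [hfl]
      exact ⟨le_refl _, le_refl _⟩
    · intro k hk1 hk2
      have hk : k = k₀ := le_antisymm hk2 hk1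
      subst hk
      have hx1 : (k₀ : ℝ) - 1/2 < x / Δ := by rw [ht] at htlow'; linarith
      have hx2 : x / Δ < (k₀ : ℝ) + 1/2 := by rw [ht] at hthigh; linarith
      constructor
      · rw [← le_div_iff₀ hΔ]; linarith
      · rw [← div_le_iff₀ hΔ]; linarith

lemma ker_const (N : ℕ) (A : Matrix (Fin N) (Fin N) ℝ)
    (hA : ∀ i j, 0 ≤ A i j)
    (hbal : ∀ i, ∑ j, A i j = ∑ j, A j i)
    (hconn : ∀ i j : Fin N,
      Relation.ReflTransGen (fun a b => A a b ≠ 0 ∨ A b a ≠ 0) i j)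
    (v : Fin N → ℝ)
    (hv : ((Matrix.diagonal fun i => ∑ j, A i j) - A).mulVec v = 0) :
    ∀ i j : Fin N, v i = v j := by
  have key : ∀ i, ∑ j, A i j * v j = (∑ j, A i j) * v i := by
    intro i
    have h := congrFun hv i
    simp only [Matrix.mulVec, dotProduct, Matrix.sub_apply, Matrix.diagonal_apply,
      Pi.zero_apply, sub_mul, ite_mul, zero_mul, Finset.sum_sub_distrib,
      Finset.sum_ite_eq, Finset.mem_univ, if_true] at h
    linarith
  have hS : (∑ i, ∑ j, A i j * (v i - v j)^2) = 0 := by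
    have expand : ∀ i : Fin N, ∑ j, A i j * (v i - v j)^2
        = (∑ j, A i j) * v i ^ 2 + (∑ j, A i j * v j ^ 2) - 2 * v i * ∑ j, A i j * v j := by
      intro i
      rw [Finset.sum_mul, Finset.mul_sum, ← Finset.sum_add_distrib, ← Finset.sum_sub_distrib]
      exact Finset.sum_congr rfl fun j _ => by ring
    simp_rw [expand, key]
    have swap : ∑ i, ∑ j, A i j * v j ^ 2 = ∑ i : Fin N, (∑ j, A i j) * v i ^ 2 := by
      rw [Finset.sum_comm]
      apply Finset.sum_congr rfl
      intro j _
      rw [← Finset.sum_mul, ← hbal j]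
    rw [Finset.sum_sub_distrib, Finset.sum_add_distrib, swap, sub_eq_zero,
      ← Finset.sum_add_distrib]
    exact Finset.sum_congr rfl fun i _ => by ring
  have hterm : ∀ i j : Fin N, A i j * (v i - v j)^2 = 0 := by
    intro i j
    have h1 : ∀ i ∈ Finset.univ, (0:ℝ) ≤ ∑ j, A i j * (v i - v j)^2 := by
      intro i _
      exact Finset.sum_nonneg fun j _ => mul_nonneg (hA i j) (sq_nonneg _)
    have h2 := (Finset.sum_eq_zero_iff_of_nonneg h1).mp hS i (Finset.mem_univ i)
    have h3 : ∀ j ∈ Finset.univ, (0:ℝ) ≤ A i j * (v i - v j)^2 :=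
      fun j _ => mul_nonneg (hA i j) (sq_nonneg _)
    exact (Finset.sum_eq_zero_iff_of_nonneg h3).mp h2 j (Finset.mem_univ j)
  have hrel : ∀ i j : Fin N, A i j ≠ 0 → v i = v j := by
    intro i j hij
    have := hterm i j
    have h2 : (v i - v j)^2 = 0 := by
      rcases mul_eq_zero.mp this with h | h
      · exact absurd h hij
      · exact h
    have := pow_eq_zero_iff (n := 2) (by norm_num) |>.mp h2
    linarith
  intro i j
  induction hconn i j with
  | refl => rfl
  | tail _ hstep ih =>
    rcases hstep with h | h
    · exact ih.trans (hrel _ _ h)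
    · exact ih.trans (hrel _ _ h).symm

/-- the Krasowskii equilibria of `ẋ = −L q_Δ(x)` are exactly the
points of the closure of `D = {x : ∃ k, q_Δ(x_i) = kΔ ∀i}`, i.e. the points
`x₀` with `(k − 1/2)Δ ≤ x₀ᵢ ≤ (k + 1/2)Δ` for some `k ∈ ℤ` and all `i`. -/
theorem krasowskii_equilibria (N : ℕ) (Δ : ℝ) (hΔ : 0 < Δ)
    (A : Matrix (Fin N) (Fin N) ℝ)
    (hA : ∀ i j, 0 ≤ A i j) (hdiag : ∀ i, A i i = 0)
    (hbal : ∀ i, ∑ j, A i j = ∑ j, A j i)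
    (hconn : ∀ i j : Fin N,
      Relation.ReflTransGen (fun a b => A a b ≠ 0 ∨ A b a ≠ 0) i j)
    (L : Matrix (Fin N) (Fin N) ℝ)
    (hL : L = (Matrix.diagonal fun i => ∑ j, A i j) - A)
    (x₀ : Fin N → ℝ) :
    (0 ∈ kras (fun y => -(L.mulVec fun i => qd Δ (y i))) x₀) ↔
      x₀ ∈ closure {x : Fin N → ℝ | ∃ k : ℤ, ∀ i, qd Δ (x i) = k * Δ} := by
  have hLrow : ∀ c : ℝ, L.mulVec (fun _ => c) = 0 := by
    intro c
    funext i
    simp only [Matrix.mulVec, dotProduct, hL, Matrix.sub_apply, Matrix.diagonal_apply,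
      Pi.zero_apply, sub_mul, ite_mul, zero_mul, Finset.sum_sub_distrib,
      Finset.sum_ite_eq, Finset.mem_univ, if_true]
    rw [← Finset.sum_mul]
    ring
  constructor
  · -- hard direction
    intro h0
    by_cases hN : N = 0
    · subst hN
      exact subset_closure ⟨0, fun i => i.elim0⟩
    haveI hNe : Nonempty (Fin N) := ⟨⟨0, Nat.pos_of_ne_zero hN⟩⟩
    simp only [kras, Set.mem_iInter] at h0
    choose δf mf Mf hδf hbound hprop using fun i : Fin N => qd_local Δ hΔ (x₀ i)
    set δ : ℝ := Finset.univ.inf' Finset.univ_nonempty δf with hδdef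
    have hδpos : 0 < δ := by
      rw [hδdef, Finset.lt_inf'_iff]
      exact fun i _ => hδf i
    set g : (Fin N → ℝ) →ₗ[ℝ] (Fin N → ℝ) := -(Matrix.mulVecLin L) with hg
    set Q : Set (Fin N → ℝ) :=
      Set.univ.pi (fun i => Set.Icc ((mf i : ℝ) * Δ) ((Mf i : ℝ) * Δ)) with hQ
    have hQconv : Convex ℝ Q := convex_pi fun i _ => convex_Icc _ _
    have hQcomp : IsCompact Q := isCompact_univ_pi fun i => isCompact_Icc
    have hgc : Continuous g := g.continuous_of_finiteDimensional
    have hTclosed : IsClosed (g '' Q) := (hQcomp.image hgc).isClosed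
    have hTconv : Convex ℝ (g '' Q) := hQconv.linear_image g
    have himg : (fun y => -(L.mulVec fun i => qd Δ (y i))) '' Metric.ball x₀ δ ⊆ g '' Q := by
      rintro z ⟨y, hy, rfl⟩
      refine ⟨fun i => qd Δ (y i), ?_, ?_⟩
      · rw [hQ, Set.mem_univ_pi]
        intro i
        have hdi : |y i - x₀ i| < δf i := by
          have h1 : dist (y i) (x₀ i) ≤ dist y x₀ := dist_le_pi_dist y x₀ i
          have h2 : dist y x₀ < δ := Metric.mem_ball.mp hy
          have h3 : δ ≤ δf i := Finset.inf'_le _ (Finset.mem_univ i)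
          rw [Real.dist_eq] at h1
          linarith
        exact (hbound i (y i) hdi)
      · simp [hg, Matrix.mulVecLin_apply]
    have hsub : closure (convexHull ℝ
        ((fun y => -(L.mulVec fun i => qd Δ (y i))) '' Metric.ball x₀ δ)) ⊆ g '' Q :=
      closure_minimal (convexHull_min himg hTconv) hTclosed
    obtain ⟨w, hwQ, hw0⟩ := hsub (h0 δ hδpos)
    have hLw : L.mulVec w = 0 := by
      have : -(L.mulVec w) = 0 := by
        rw [hg] at hw0
        simpa [Matrix.mulVecLin_apply] using hw0
      exact neg_eq_zero.mp this
    have hwconst : ∀ i j : Fin N, w i = w j := by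
      apply ker_const N A hA hbal hconn w
      rw [← hL]; exact hLw
    obtain ⟨i₀⟩ := hNe
    set c : ℝ := w i₀ with hc
    have hcQ : ∀ i, (mf i : ℝ) * Δ ≤ c ∧ c ≤ (Mf i : ℝ) * Δ := by
      intro i
      have := (Set.mem_univ_pi.mp hwQ) i
      rw [hwconst i i₀] at this
      exact this
    set k : ℤ := ⌊c / Δ⌋ with hk
    have hki : ∀ i, mf i ≤ k ∧ k ≤ Mf i := by
      intro i
      obtain ⟨h1, h2⟩ := hcQ i
      constructor
      · exact Int.le_floor.mpr ((le_div_iff₀ hΔ).mpr (by linarith))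
      · have hle : (k : ℝ) ≤ (Mf i : ℝ) :=
          le_trans (Int.floor_le _) ((div_le_iff₀ hΔ).mpr (by linarith))
        exact_mod_cast hle
    have hxk : ∀ i, ((k : ℝ) - 1/2) * Δ ≤ x₀ i ∧ x₀ i ≤ ((k : ℝ) + 1/2) * Δ :=
      fun i => hprop i k (hki i).1 (hki i).2
    rw [Metric.mem_closure_iff]
    intro ε hε
    set ε' : ℝ := min (ε/2) (Δ/2) with hε'
    have hε'pos : 0 < ε' := lt_min (by linarith) (by linarith)
    have hε'ε : ε' < ε := lt_of_le_of_lt (min_le_left _ _) (by linarith)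
    have hε'Δ : ε' ≤ Δ := le_trans (min_le_right _ _) (by linarith)
    refine ⟨fun i => min (x₀ i) (((k : ℝ) + 1/2) * Δ - ε'), ⟨k, fun i => ?_⟩, ?_⟩
    · apply qd_eq_of_Ico Δ hΔ
      · apply le_min (hxk i).1
        nlinarith
      · exact lt_of_le_of_lt (min_le_right _ _) (by linarith)
    · rw [dist_pi_lt_iff hε]
      intro i
      rw [Real.dist_eq, abs_lt]
      have hyi := min_le_left (x₀ i) (((k : ℝ) + 1/2) * Δ - ε')
      have hyi2 : x₀ i - (min (x₀ i) (((k : ℝ) + 1/2) * Δ - ε')) ≤ ε' := by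
        rcases min_cases (x₀ i) (((k : ℝ) + 1/2) * Δ - ε') with ⟨h, _⟩ | ⟨h, _⟩ <;>
          rw [h] <;> linarith [(hxk i).2]
      constructor <;> linarith
  · -- easy direction
    intro hx
    simp only [kras, Set.mem_iInter]
    intro δ hδ
    rw [Metric.mem_closure_iff] at hx
    obtain ⟨x, hxD, hdist⟩ := hx δ hδ
    obtain ⟨k, hk⟩ := hxD
    have hx_ball : x ∈ Metric.ball x₀ δ := by
      rw [Metric.mem_ball, dist_comm]; exact hdist
    have hfx : -(L.mulVec fun i => qd Δ (x i)) = 0 := by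
      have h1 : (fun i => qd Δ (x i)) = fun _ => (k : ℝ) * Δ := funext hk
      rw [h1, hLrow, neg_zero]
    exact subset_closure (subset_convexHull ℝ _ ⟨x, hx_ball, hfx⟩)
end

section
/- For the hybrid system with hysteretic quantizers, any solution z(t,j) = (x(t,j), q(t,j)) with initial condition in X₀ satisfies for all hybrid times (t,j) and all i: min_k q_k(0,0) − Δ/2 ≤ q_i(t,j) ≤ max_k q_k(0,0) + Δ/2 and min_k q_k(0,0) − Δ ≤ x_i(t,j) ≤ max_k q_k(0,0) + Δ. -/
open Matrix

/-- boundedness of solutions of the hybrid system with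
hysteretic quantizers.  A hybrid solution is encoded by jump times `τ j`
(with `τ 0 = 0`, monotone), piecewise-constant discrete states `q j`, and
continuous states `x j s` on `[τ j, τ (j+1)]` flowing along `ẋ = −Lq`;
jumps leave `x` unchanged and update each `q_i` by `±Δ/2` according to the
hysteresis rule.  Starting from `X₀`, every component of `q` stays within
`Δ/2` and every component of `x` within `Δ` of the initial range of `q`. -/
theorem hybrid_solutions_bounded (N : ℕ) [NeZero N] (Δ : ℝ) (hΔ : 0 < Δ)
    (A : Matrix (Fin N) (Fin N) ℝ)
    (hA : ∀ i j, 0 ≤ A i j) (hdiag : ∀ i, A i i = 0)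
    (hbal : ∀ i, ∑ j, A i j = ∑ j, A j i)
    (L : Matrix (Fin N) (Fin N) ℝ)
    (hL : L = (Matrix.diagonal fun i => ∑ j, A i j) - A)
    (τ : ℕ → ℝ) (hτ0 : τ 0 = 0) (hτ : Monotone τ)
    (x : ℕ → ℝ → Fin N → ℝ) (q : ℕ → Fin N → ℝ)
    (hlat : ∀ j i, ∃ m : ℤ, q j i = m * (Δ / 2))
    (hflow : ∀ j, ∀ s ∈ Set.Icc (τ j) (τ (j + 1)),
      x j s = x j (τ j) + (s - τ j) • (-(L.mulVec (q j))))
    (hC : ∀ j, ∀ s ∈ Set.Ico (τ j) (τ (j + 1)), ∀ i, |x j s i - q j i| < Δ / 2)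
    (hjumpx : ∀ j, x (j + 1) (τ (j + 1)) = x j (τ (j + 1)))
    (hjumpq : ∀ j i, q (j + 1) i =
      if q j i + Δ / 2 ≤ x j (τ (j + 1)) i then q j i + Δ / 2
      else if x j (τ (j + 1)) i ≤ q j i - Δ / 2 then q j i - Δ / 2
      else q j i)
    (hX0 : ∀ i, q 0 i - Δ / 2 ≤ x 0 0 i ∧ x 0 0 i < q 0 i + Δ / 2) :
    ∀ j, ∀ s ∈ Set.Icc (τ j) (τ (j + 1)), ∀ i,
      (Finset.univ.inf' Finset.univ_nonempty (q 0) - Δ / 2 ≤ q j i ∧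
        q j i ≤ Finset.univ.sup' Finset.univ_nonempty (q 0) + Δ / 2) ∧
      (Finset.univ.inf' Finset.univ_nonempty (q 0) - Δ ≤ x j s i ∧
        x j s i ≤ Finset.univ.sup' Finset.univ_nonempty (q 0) + Δ) := by
  have hΔ2 : (0:ℝ) < Δ / 2 := by linarith
  set M0 := Finset.univ.sup' Finset.univ_nonempty (q 0) with hM0def
  set m0 := Finset.univ.inf' Finset.univ_nonempty (q 0) with hm0def
  have hqM : ∀ i, q 0 i ≤ M0 := fun i => Finset.le_sup' (q 0) (Finset.mem_univ i)
  have hqm : ∀ i, m0 ≤ q 0 i := fun i => Finset.inf'_le (q 0) (Finset.mem_univ i)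
  obtain ⟨kM, -, hkM⟩ := Finset.exists_mem_eq_sup' (Finset.univ_nonempty (α := Fin N)) (q 0)
  obtain ⟨km, -, hkm⟩ := Finset.exists_mem_eq_inf' (Finset.univ_nonempty (α := Fin N)) (q 0)
  have hM0lat : ∃ m : ℤ, M0 = m * (Δ / 2) := by rw [hM0def, hkM]; exact hlat 0 kM
  have hm0lat : ∃ m : ℤ, m0 = m * (Δ / 2) := by rw [hm0def, hkm]; exact hlat 0 km
  -- lattice comparison lemma
  have lat : ∀ a b : ℝ, (∃ m : ℤ, a = m * (Δ/2)) → (∃ n : ℤ, b = n * (Δ/2)) →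
      a < b + Δ/2 → a ≤ b := by
    rintro a b ⟨m, rfl⟩ ⟨n, rfl⟩ h
    have h1 : (m : ℝ) * (Δ/2) < ((n : ℝ) + 1) * (Δ/2) := by
      have : ((n:ℝ) + 1) * (Δ/2) = n * (Δ/2) + Δ/2 := by ring
      linarith
    have h2 : (m : ℝ) < (n : ℝ) + 1 := lt_of_mul_lt_mul_right h1 (le_of_lt hΔ2)
    have h3 : m < n + 1 := by exact_mod_cast h2
    have h4 : (m : ℝ) ≤ n := by exact_mod_cast Int.lt_add_one_iff.mp h3
    exact mul_le_mul_of_nonneg_right h4 (le_of_lt hΔ2)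
  -- pointwise flow formula
  have hxpt : ∀ j, ∀ s ∈ Set.Icc (τ j) (τ (j+1)), ∀ i,
      x j s i = x j (τ j) i + (s - τ j) * (-(L.mulVec (q j) i)) := by
    intro j s hs i
    have := congrFun (hflow j s hs) i
    simpa using this
  -- Laplacian row formula
  have hLq : ∀ (w : Fin N → ℝ) i, L.mulVec w i = ∑ k, A i k * (w i - w k) := by
    intro w i
    rw [hL, Matrix.sub_mulVec]
    simp only [Pi.sub_apply]
    rw [Matrix.mulVec_diagonal]
    simp only [Matrix.mulVec, dotProduct]
    rw [Finset.sum_mul, ← Finset.sum_sub_distrib]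
    exact Finset.sum_congr rfl fun k _ => by ring
  -- stepA: the Δ/2-bound between x and q propagates to the closed interval
  have stepA : ∀ j, (∀ k, |x j (τ j) k - q j k| ≤ Δ/2) →
      ∀ s ∈ Set.Icc (τ j) (τ (j+1)), ∀ i, |x j s i - q j i| ≤ Δ/2 := by
    intro j Pj s hs i
    rcases lt_or_eq_of_le hs.2 with hlt2 | hEnd
    · exact le_of_lt (hC j s ⟨hs.1, hlt2⟩ i)
    · rcases eq_or_lt_of_le (hτ (Nat.le_succ j)) with heq | hlt
      · have hseq : s = τ j := by rw [hEnd, ← heq]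
        rw [hseq]; exact Pj i
      · have hcl : Set.Icc (τ j) (τ (j+1)) ⊆
            {t : ℝ | |x j (τ j) i + (t - τ j) * (-(L.mulVec (q j) i)) - q j i| ≤ Δ/2} := by
          rw [← closure_Ico (ne_of_lt hlt)]
          refine closure_minimal ?_ ?_
          · intro t ht
            have h1 := hC j t ht i
            rw [hxpt j t (Set.Ico_subset_Icc_self ht) i] at h1
            exact le_of_lt h1
          · refine isClosed_le (Continuous.abs ?_) continuous_const
            exact (continuous_const.add ((continuous_id.sub continuous_const).mul
              continuous_const)).sub continuous_const
        have h2 := hcl (Set.right_mem_Icc.mpr (le_of_lt hlt))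
        rw [hEnd, hxpt j (τ (j+1)) (Set.right_mem_Icc.mpr (le_of_lt hlt)) i]
        exact h2
  -- stepB: monotonicity of extreme components along the flow
  have stepBmax : ∀ j, (∀ k, q j k ≤ M0 + Δ/2) → ∀ i, q j i = M0 + Δ/2 →
      x j (τ j) i < q j i + Δ/2 → ∀ s ∈ Set.Icc (τ j) (τ (j+1)), x j s i < q j i + Δ/2 := by
    intro j hub i hqi hx0 s hs
    rw [hxpt j s hs i]
    have hmax : ∀ k, q j k ≤ q j i := fun k => by rw [hqi]; exact hub k
    have hv : 0 ≤ L.mulVec (q j) i := by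
      rw [hLq]
      exact Finset.sum_nonneg fun k _ => mul_nonneg (hA i k) (by linarith [hmax k])
    nlinarith [mul_nonneg (sub_nonneg.mpr hs.1) hv]
  have stepBmin : ∀ j, (∀ k, m0 - Δ/2 ≤ q j k) → ∀ i, q j i = m0 - Δ/2 →
      q j i - Δ/2 < x j (τ j) i → ∀ s ∈ Set.Icc (τ j) (τ (j+1)), q j i - Δ/2 < x j s i := by
    intro j hlb i hqi hx0 s hs
    rw [hxpt j s hs i]
    have hmin : ∀ k, q j i ≤ q j k := fun k => by rw [hqi]; exact hlb k
    have hv : L.mulVec (q j) i ≤ 0 := by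
      rw [hLq]
      exact Finset.sum_nonpos fun k _ => mul_nonpos_of_nonneg_of_nonpos (hA i k) (by linarith [hmin k])
    nlinarith [mul_nonpos_of_nonneg_of_nonpos (sub_nonneg.mpr hs.1) hv]
  -- key invariant by induction on jumps
  have key : ∀ j, ∀ i, (m0 - Δ/2 ≤ q j i ∧ q j i ≤ M0 + Δ/2) ∧
      |x j (τ j) i - q j i| ≤ Δ/2 ∧
      (q j i = M0 + Δ/2 → x j (τ j) i < q j i + Δ/2) ∧
      (q j i = m0 - Δ/2 → q j i - Δ/2 < x j (τ j) i) := by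
    intro j
    induction j with
    | zero =>
      intro i
      have h0 := hX0 i
      rw [hτ0]
      refine ⟨⟨by linarith [hqm i], by linarith [hqM i]⟩, ?_, fun _ => by linarith [h0.2],
        fun hq => ?_⟩
      · rw [abs_le]; constructor <;> linarith [h0.1, h0.2]
      · exfalso; linarith [hqm i]
    | succ j ih =>
      have Pub : ∀ k, q j k ≤ M0 + Δ/2 := fun k => ((ih k).1).2
      have Plb : ∀ k, m0 - Δ/2 ≤ q j k := fun k => ((ih k).1).1
      have Pabs : ∀ k, |x j (τ j) k - q j k| ≤ Δ/2 := fun k => (ih k).2.1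
      have hTmem : τ (j+1) ∈ Set.Icc (τ j) (τ (j+1)) := Set.right_mem_Icc.mpr (hτ (Nat.le_succ j))
      have hxT : ∀ k, |x j (τ (j+1)) k - q j k| ≤ Δ/2 := fun k => stepA j Pabs _ hTmem k
      intro i
      have hjx : x (j+1) (τ (j+1)) = x j (τ (j+1)) := hjumpx j
      have hxTi := hxT i
      rw [abs_le] at hxTi
      rw [hjx, hjumpq j i]
      split_ifs with h1 h2
      · -- upward jump: x = q + Δ/2 exactly
        have hxe : x j (τ (j+1)) i = q j i + Δ/2 := le_antisymm (by linarith [hxTi.2]) h1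
        have hne : q j i ≠ M0 + Δ/2 := by
          intro hq
          exact absurd hxe (ne_of_lt (stepBmax j Pub i hq ((ih i).2.2.1 hq) _ hTmem))
        have hle : q j i ≤ M0 := lat _ _ (hlat j i) hM0lat (lt_of_le_of_ne (Pub i) hne)
        refine ⟨⟨by linarith [Plb i], by linarith⟩, ?_, fun _ => by rw [hxe]; linarith,
          fun _ => by rw [hxe]; linarith⟩
        rw [hxe]; rw [show q j i + Δ/2 - (q j i + Δ/2) = 0 by ring, abs_zero]; linarith
      · -- downward jump: x = q - Δ/2 exactly
        have hxe : x j (τ (j+1)) i = q j i - Δ/2 := le_antisymm h2 (by linarith [hxTi.1])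
        have hne : q j i ≠ m0 - Δ/2 := by
          intro hq
          have := stepBmin j Plb i hq ((ih i).2.2.2 hq) _ hTmem
          rw [hxe] at this; linarith
        have hge : m0 ≤ q j i := by
          refine lat m0 (q j i) hm0lat (hlat j i) ?_
          have := lt_of_le_of_ne (Plb i) (Ne.symm hne)
          linarith
        refine ⟨⟨by linarith, by linarith [Pub i]⟩, ?_, fun _ => by rw [hxe]; linarith,
          fun _ => by rw [hxe]; linarith⟩
        rw [hxe]; rw [show q j i - Δ/2 - (q j i - Δ/2) = 0 by ring, abs_zero]; linarith
      · -- no jump in this component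
        push_neg at h1 h2
        refine ⟨⟨Plb i, Pub i⟩, hxT i, fun _ => h1, fun _ => h2⟩
  -- conclusion
  intro j s hs i
  have Pabs : ∀ k, |x j (τ j) k - q j k| ≤ Δ/2 := fun k => (key j k).2.1
  have hb := (key j i).1
  have ha := stepA j Pabs s hs i
  rw [abs_le] at ha
  exact ⟨hb, ⟨by linarith [hb.1, ha.1], by linarith [hb.2, ha.2]⟩⟩
end

section
/- Equilibria of the hybrid system: (x,q) ∈ X is an equilibrium (every solution from it stays constant) if and only if there exists k ∈ ℤ such that either q_i = kΔ for all i or q_i = kΔ + Δ/2 for all i, and in both cases q_i − Δ/2 < x_i < q_i + Δ/2 for all i. -/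
/-!
An equilibrium must survive a pure jump at time `0` and a short flow. The jump fixes `q₀` only
if `x₀` lies strictly inside the hysteresis band around `q₀`, i.e. in `C`; from inside `C` a flow of
small positive length stays in `C`, and it fixes `x₀` only if `L q₀ = 0`. Conversely, from a point
of `C` with `L q₀ = 0` neither flows nor jumps move the state.

For a weight-balanced graph, `∑ᵢⱼ aᵢⱼ (qᵢ - qⱼ)² = 2 qᵀ L q`, so `L q = 0` makes `q` constant
along every edge, hence constant by connectivity. A constant on the half-lattice `(Δ/2)ℤ` is `kΔ`
or `kΔ + Δ/2`.
-/

open Matrix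

section Laplacian

variable {ι : Type*} [Fintype ι] {A : Matrix ι ι ℝ}

def weightedLaplacian [DecidableEq ι] (A : Matrix ι ι ℝ) : Matrix ι ι ℝ :=
  diagonal (fun i => ∑ j, A i j) - A

lemma weightedLaplacian_mulVec_apply [DecidableEq ι] (A : Matrix ι ι ℝ) (q : ι → ℝ) (i : ι) :
    (weightedLaplacian A *ᵥ q) i = ∑ j, A i j * (q i - q j) := by
  rw [weightedLaplacian, sub_mulVec, Pi.sub_apply, mulVec_diagonal, Finset.sum_mul, mulVec,
    dotProduct, ← Finset.sum_sub_distrib]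
  simp only [mul_sub]

lemma sum_sum_mul_sub_eq_zero (hbal : ∀ i, ∑ j, A i j = ∑ j, A j i) (f : ι → ℝ) :
    ∑ i, ∑ j, A i j * (f i - f j) = 0 := by
  simp only [mul_sub, Finset.sum_sub_distrib, ← Finset.sum_mul, hbal]
  rw [Finset.sum_comm, sub_eq_zero]
  simp only [Finset.sum_mul]

lemma sum_sum_mul_sub_sq (hbal : ∀ i, ∑ j, A i j = ∑ j, A j i) (q : ι → ℝ) :
    ∑ i, ∑ j, A i j * (q i - q j) ^ 2 = 2 * ∑ i, q i * ∑ j, A i j * (q i - q j) := by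
  have h := sum_sum_mul_sub_eq_zero hbal (q · ^ 2)
  have hsq : ∀ i j, A i j * (q i - q j) ^ 2
      = 2 * (q i * (A i j * (q i - q j))) - A i j * (q i ^ 2 - q j ^ 2) := fun i j => by ring
  simp only [hsq, Finset.sum_sub_distrib, h, Finset.mul_sum]
  simp

lemma eq_of_sum_mul_sub_eq_zero (hA : ∀ i j, 0 ≤ A i j) (hbal : ∀ i, ∑ j, A i j = ∑ j, A j i)
    {q : ι → ℝ} (hq : ∀ i, ∑ j, A i j * (q i - q j) = 0) {i j : ι} (hij : A i j ≠ 0) :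
    q i = q j := by
  have hnonneg : ∀ i j, 0 ≤ A i j * (q i - q j) ^ 2 := fun i j =>
    mul_nonneg (hA i j) (sq_nonneg _)
  have hsum : ∑ i, ∑ j, A i j * (q i - q j) ^ 2 = 0 := by simp [sum_sum_mul_sub_sq hbal, hq]
  rw [Finset.sum_eq_zero_iff_of_nonneg fun i _ => Finset.sum_nonneg fun j _ => hnonneg i j] at hsum
  have hij' := (Finset.sum_eq_zero_iff_of_nonneg fun j _ => hnonneg i j).1
    (hsum i (Finset.mem_univ i)) j (Finset.mem_univ j)
  simpa [hij, sub_eq_zero] using hij'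

lemma weightedLaplacian_mulVec_eq_zero_iff [DecidableEq ι] (hA : ∀ i j, 0 ≤ A i j)
    (hbal : ∀ i, ∑ j, A i j = ∑ j, A j i)
    (hconn : ∀ i j, Relation.ReflTransGen (fun a b => A a b ≠ 0 ∨ A b a ≠ 0) i j) {q : ι → ℝ} :
    weightedLaplacian A *ᵥ q = 0 ↔ ∀ i j, q i = q j := by
  simp only [funext_iff, weightedLaplacian_mulVec_apply, Pi.zero_apply]
  refine ⟨fun hq i j => ?_, fun hq i =>
    Finset.sum_eq_zero fun j _ => by rw [hq i j, sub_self, mul_zero]⟩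
  have hedge : ∀ a b, A a b ≠ 0 → q a = q b := fun a b => eq_of_sum_mul_sub_eq_zero hA hbal hq
  simpa [Relation.reflTransGen_eq_self] using
    (hconn i j).lift q fun a b h => h.elim (hedge a b) fun h => (hedge b a h).symm

end Laplacian

lemma exists_int_eq_const_iff {ι : Type*} {Δ : ℝ} {q : ι → ℝ}
    (hq : ∀ i, ∃ m : ℤ, q i = m * (Δ / 2)) :
    (∃ k : ℤ, (q = fun _ => k * Δ) ∨ (q = fun _ => k * Δ + Δ / 2)) ↔ ∀ i j, q i = q j := by
  refine ⟨by rintro ⟨k, rfl | rfl⟩ <;> simp, fun h => ?_⟩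
  cases isEmpty_or_nonempty ι with
  | inl => exact ⟨0, Or.inl (funext isEmptyElim)⟩
  | inr =>
    obtain ⟨i⟩ := ‹Nonempty ι›
    obtain ⟨m, hm⟩ := hq i
    obtain ⟨k, rfl | rfl⟩ := Int.even_or_odd' m
    · exact ⟨k, Or.inl (funext fun j => by rw [h j i, hm]; push_cast; ring)⟩
    · exact ⟨k, Or.inr (funext fun j => by rw [h j i, hm]; push_cast; ring)⟩

section Hybrid

variable {ι : Type*} {Δ : ℝ}

noncomputable def jumpMap (Δ : ℝ) (x q : ι → ℝ) : ι → ℝ := fun i =>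
  if q i + Δ / 2 ≤ x i then q i + Δ / 2
  else if x i ≤ q i - Δ / 2 then q i - Δ / 2
  else q i

lemma jumpMap_eq_self {x q : ι → ℝ} (h : ∀ i, |x i - q i| < Δ / 2) : jumpMap Δ x q = q :=
  funext fun i => by
    obtain ⟨h₁, h₂⟩ := abs_sub_lt_iff.1 (h i)
    simp only [jumpMap]
    rw [if_neg (by linarith), if_neg (by linarith)]

lemma jumpMap_eq_self_iff (hΔ : 0 < Δ) {x q : ι → ℝ} :
    jumpMap Δ x q = q ↔ ∀ i, |x i - q i| < Δ / 2 := by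
  refine ⟨fun h i => ?_, jumpMap_eq_self⟩
  have hi := congrFun h i
  simp only [jumpMap] at hi
  split_ifs at hi with h₁ h₂
  · linarith
  · linarith
  · exact abs_sub_lt_iff.2 ⟨by linarith, by linarith⟩

lemma exists_pos_forall_Ico_abs_sub_lt [Finite ι] {x₀ q₀ : ι → ℝ} {r : ℝ}
    (h : ∀ i, |x₀ i - q₀ i| < r) (v : ι → ℝ) :
    ∃ ε > 0, ∀ s ∈ Set.Ico 0 ε, ∀ i, |x₀ i + s * v i - q₀ i| < r := by
  have hev : ∀ᶠ s in nhds (0 : ℝ), ∀ i, |x₀ i + s * v i - q₀ i| < r :=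
    Filter.eventually_all.2 fun i =>
      ContinuousAt.eventually_lt (by fun_prop) continuousAt_const (by simpa using h i)
  obtain ⟨ε, hε, hball⟩ := Metric.eventually_nhds_iff.1 hev
  exact ⟨ε, hε, fun s hs => hball (by simpa [abs_of_nonneg hs.1] using hs.2)⟩

variable [Fintype ι] {L : Matrix ι ι ℝ} {x₀ q₀ : ι → ℝ}

/-- A hybrid arc on the time domain `⋃ⱼ [τ j, τ (j + 1)] × {j}`: during the `j`-th flow interval
the state is `(x j s, q j)`, and the `j`-th jump happens at time `τ (j + 1)`. -/
structure IsHybridSolution (Δ : ℝ) (L : Matrix ι ι ℝ) (x₀ q₀ : ι → ℝ) (τ : ℕ → ℝ)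
    (x : ℕ → ℝ → ι → ℝ) (q : ℕ → ι → ℝ) : Prop where
  τ_zero : τ 0 = 0
  monotone_τ : Monotone τ
  x_zero : x 0 0 = x₀
  q_zero : q 0 = q₀
  flow : ∀ j, ∀ s ∈ Set.Icc (τ j) (τ (j + 1)), x j s = x j (τ j) + (s - τ j) • (-(L *ᵥ q j))
  flow_mem : ∀ j, ∀ s ∈ Set.Ico (τ j) (τ (j + 1)), ∀ i, |x j s i - q j i| < Δ / 2
  jump_x : ∀ j, x (j + 1) (τ (j + 1)) = x j (τ (j + 1))
  jump_q : ∀ j, q (j + 1) = jumpMap Δ (x j (τ (j + 1))) (q j)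

def IsEquilibrium (Δ : ℝ) (L : Matrix ι ι ℝ) (x₀ q₀ : ι → ℝ) : Prop :=
  ∀ τ x q, IsHybridSolution Δ L x₀ q₀ τ x q →
    ∀ j, ∀ s ∈ Set.Icc (τ j) (τ (j + 1)), x j s = x₀ ∧ q j = q₀

lemma IsHybridSolution.eq_of_mulVec_eq_zero {τ : ℕ → ℝ} {x : ℕ → ℝ → ι → ℝ} {q : ℕ → ι → ℝ}
    (hs : IsHybridSolution Δ L x₀ q₀ τ x q) (hC : ∀ i, |x₀ i - q₀ i| < Δ / 2)
    (hL : L *ᵥ q₀ = 0) (j : ℕ) : ∀ s ∈ Set.Icc (τ j) (τ (j + 1)), x j s = x₀ ∧ q j = q₀ := by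
  have hstart : x j (τ j) = x₀ ∧ q j = q₀ := by
    induction j with
    | zero => exact ⟨hs.τ_zero ▸ hs.x_zero, hs.q_zero⟩
    | succ j ih =>
      have hend : x j (τ (j + 1)) = x₀ := by
        rw [hs.flow j _ ⟨hs.monotone_τ j.le_succ, le_rfl⟩, ih.1, ih.2, hL]
        simp
      rw [hs.jump_x, hend, hs.jump_q, hend, ih.2, jumpMap_eq_self hC]
      exact ⟨rfl, rfl⟩
  intro s hs'
  rw [hs.flow j s hs', hstart.1, hstart.2, hL]
  simp

/-- Flow for time `ε`, then jump forever; for `ε = 0` this is a pure jump solution. -/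
lemma isHybridSolution_flow_then_jump {ε : ℝ} (hε : 0 ≤ ε)
    (hflow : ∀ s ∈ Set.Ico 0 ε, ∀ i, |x₀ i + s * (-(L *ᵥ q₀)) i - q₀ i| < Δ / 2) :
    IsHybridSolution Δ L x₀ q₀ (fun j => if j = 0 then 0 else ε)
      (fun _ s => x₀ + min s ε • -(L *ᵥ q₀))
      (fun n => (jumpMap Δ (x₀ + ε • -(L *ᵥ q₀)))^[n] q₀) where
  τ_zero := rfl
  monotone_τ := monotone_nat_of_le_succ fun j => by split_ifs <;> simp_all
  x_zero := by simp [min_eq_left hε]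
  q_zero := rfl
  flow j s hs := by
    rcases j with _ | j
    · simp_all
    · simp_all [le_antisymm hs.2 hs.1]
  flow_mem j s hs i := by
    rcases j with _ | j <;> simp_all
  jump_x _ := rfl
  jump_q j := by simp [Function.iterate_succ_apply']

lemma IsEquilibrium.abs_sub_lt (hΔ : 0 < Δ) (h : IsEquilibrium Δ L x₀ q₀) :
    ∀ i, |x₀ i - q₀ i| < Δ / 2 := by
  have hq := (h _ _ _ (isHybridSolution_flow_then_jump le_rfl (by simp)) 1 0 (by simp)).2
  rw [← jumpMap_eq_self_iff hΔ]
  simpa using hq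

lemma IsEquilibrium.mulVec_eq_zero (hΔ : 0 < Δ) (h : IsEquilibrium Δ L x₀ q₀) :
    L *ᵥ q₀ = 0 := by
  obtain ⟨ε, hε, hflow⟩ := exists_pos_forall_Ico_abs_sub_lt (h.abs_sub_lt hΔ) (-(L *ᵥ q₀))
  have hx := (h _ _ _ (isHybridSolution_flow_then_jump hε.le hflow) 0 ε (by simp [hε.le])).1
  simpa [hε.ne'] using hx

theorem isEquilibrium_iff (hΔ : 0 < Δ) :
    IsEquilibrium Δ L x₀ q₀ ↔ (∀ i, |x₀ i - q₀ i| < Δ / 2) ∧ L *ᵥ q₀ = 0 :=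
  ⟨fun h => ⟨h.abs_sub_lt hΔ, h.mulVec_eq_zero hΔ⟩,
    fun ⟨hC, hL⟩ _ _ _ hs => hs.eq_of_mulVec_eq_zero hC hL⟩

end Hybrid

theorem hybrid_equilibria_general (N : ℕ) (Δ : ℝ) (hΔ : 0 < Δ)
    (A : Matrix (Fin N) (Fin N) ℝ)
    (hA : ∀ i j, 0 ≤ A i j)
    (hbal : ∀ i, ∑ j, A i j = ∑ j, A j i)
    (hconn : ∀ i j : Fin N,
      Relation.ReflTransGen (fun a b => A a b ≠ 0 ∨ A b a ≠ 0) i j)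
    (L : Matrix (Fin N) (Fin N) ℝ)
    (hL : L = (Matrix.diagonal fun i => ∑ j, A i j) - A)
    (x₀ q₀ : Fin N → ℝ)
    (hq₀ : ∀ i, ∃ m : ℤ, q₀ i = m * (Δ / 2)) :
    (∀ (τ : ℕ → ℝ) (x : ℕ → ℝ → Fin N → ℝ) (q : ℕ → Fin N → ℝ),
      τ 0 = 0 → Monotone τ → x 0 0 = x₀ → q 0 = q₀ →
      (∀ j, ∀ s ∈ Set.Icc (τ j) (τ (j + 1)),
        x j s = x j (τ j) + (s - τ j) • (-(L.mulVec (q j)))) →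
      (∀ j, ∀ s ∈ Set.Ico (τ j) (τ (j + 1)), ∀ i, |x j s i - q j i| < Δ / 2) →
      (∀ j, x (j + 1) (τ (j + 1)) = x j (τ (j + 1))) →
      (∀ j i, q (j + 1) i =
        if q j i + Δ / 2 ≤ x j (τ (j + 1)) i then q j i + Δ / 2
        else if x j (τ (j + 1)) i ≤ q j i - Δ / 2 then q j i - Δ / 2
        else q j i) →
      (∀ j, ∀ s ∈ Set.Icc (τ j) (τ (j + 1)), x j s = x₀ ∧ q j = q₀))
    ↔ ((∃ k : ℤ, (q₀ = fun _ => k * Δ) ∨ (q₀ = fun _ => k * Δ + Δ / 2)) ∧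
        (∀ i, q₀ i - Δ / 2 < x₀ i ∧ x₀ i < q₀ i + Δ / 2)) := by
  obtain rfl : L = weightedLaplacian A := hL
  have hC : ∀ i, q₀ i - Δ / 2 < x₀ i ∧ x₀ i < q₀ i + Δ / 2 ↔ |x₀ i - q₀ i| < Δ / 2 :=
    fun i => by
      rw [abs_sub_lt_iff]
      constructor <;> intro h <;> constructor <;> linarith [h.1, h.2]
  rw [exists_int_eq_const_iff hq₀, ← weightedLaplacian_mulVec_eq_zero_iff hA hbal hconn,
    forall_congr' hC, and_comm, ← isEquilibrium_iff hΔ]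
  exact ⟨fun h τ x q hs => h τ x q hs.τ_zero hs.monotone_τ hs.x_zero hs.q_zero hs.flow hs.flow_mem
      hs.jump_x fun j => congrFun (hs.jump_q j),
    fun h τ x q h₁ h₂ h₃ h₄ h₅ h₆ h₇ h₈ =>
      h τ x q ⟨h₁, h₂, h₃, h₄, h₅, h₆, h₇, fun j => funext (h₈ j)⟩⟩

/-- equilibria of the hybrid system with hysteretic quantizers.
A state `(x₀, q₀) ∈ X = ℝ^N × (Δℤ ∪ (Δℤ + Δ/2))^N` is an equilibrium (every
hybrid solution starting from it stays constant) if and only if there is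
`k ∈ ℤ` with either `q₀ᵢ = kΔ` for all `i` or `q₀ᵢ = kΔ + Δ/2` for all `i`,
and `q₀ᵢ − Δ/2 < x₀ᵢ < q₀ᵢ + Δ/2` for all `i`. -/
theorem hybrid_equilibria (N : ℕ) [NeZero N] (Δ : ℝ) (hΔ : 0 < Δ)
    (A : Matrix (Fin N) (Fin N) ℝ)
    (hA : ∀ i j, 0 ≤ A i j) (hdiag : ∀ i, A i i = 0)
    (hbal : ∀ i, ∑ j, A i j = ∑ j, A j i)
    (hconn : ∀ i j : Fin N,
      Relation.ReflTransGen (fun a b => A a b ≠ 0 ∨ A b a ≠ 0) i j)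
    (L : Matrix (Fin N) (Fin N) ℝ)
    (hL : L = (Matrix.diagonal fun i => ∑ j, A i j) - A)
    (x₀ q₀ : Fin N → ℝ)
    (hq₀ : ∀ i, ∃ m : ℤ, q₀ i = m * (Δ / 2)) :
    (∀ (τ : ℕ → ℝ) (x : ℕ → ℝ → Fin N → ℝ) (q : ℕ → Fin N → ℝ),
      τ 0 = 0 → Monotone τ → x 0 0 = x₀ → q 0 = q₀ →
      (∀ j, ∀ s ∈ Set.Icc (τ j) (τ (j + 1)),
        x j s = x j (τ j) + (s - τ j) • (-(L.mulVec (q j)))) →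
      (∀ j, ∀ s ∈ Set.Ico (τ j) (τ (j + 1)), ∀ i, |x j s i - q j i| < Δ / 2) →
      (∀ j, x (j + 1) (τ (j + 1)) = x j (τ (j + 1))) →
      (∀ j i, q (j + 1) i =
        if q j i + Δ / 2 ≤ x j (τ (j + 1)) i then q j i + Δ / 2
        else if x j (τ (j + 1)) i ≤ q j i - Δ / 2 then q j i - Δ / 2
        else q j i) →
      (∀ j, ∀ s ∈ Set.Icc (τ j) (τ (j + 1)), x j s = x₀ ∧ q j = q₀))
    ↔ ((∃ k : ℤ, (q₀ = fun _ => k * Δ) ∨ (q₀ = fun _ => k * Δ + Δ / 2)) ∧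
        (∀ i, q₀ i - Δ / 2 < x₀ i ∧ x₀ i < q₀ i + Δ / 2)) :=
  hybrid_equilibria_general N Δ hΔ A hA hbal hconn L hL x₀ q₀ hq₀
end

section
/- Existence of a periodic (limit-cycle) solution for the hysteretic hybrid system on two agents: for the system ẋ₁ = q₂ − q₁, ẋ₂ = q₁ − q₂ with hysteretic jump rule and fixed q₁(0,0) = kΔ (k ∈ ℤ), the solution with initial condition x(0,0) = (kΔ − Δ/4, kΔ + 3Δ/4), q(0,0) = (kΔ, kΔ + Δ) satisfies z(9/4, 3) = z(1/4, 1); i.e., the solution reaches a periodic orbit of period 2 (in continuous time) in finite time, and in particular does not converge to the set of equilibria. -/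
/-!
Between jumps `q` is constant, so `x` moves on a straight line with velocity
`(q₂ - q₁, q₁ - q₂)`, and a jump happens exactly when some `|xᵢ - qᵢ|` first reaches `Δ / 2`;
hence every jump time is pinned down by the flow alone. From the given initial state agent 2
reaches its threshold first, at `t = 1/4`, and the jump leaves `x = q = (kΔ, kΔ + Δ/2)`.
From a state `x = q = (a, b)` with `|b - a| = Δ / 2` the two agents travel towards each other's
positions at speed `Δ / 2`, reach their thresholds simultaneously one time unit later, and the
jump leaves `x = q = (b, a)`. Two such swaps return to the state reached at `t = 1/4`.
-/

open Matrix Set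

def IsFirstExit {α : Type*} [Preorder α] (P : α → Prop) (t₀ t : α) : Prop :=
  t₀ ≤ t ∧ (∀ s ∈ Ico t₀ t, P s) ∧ ¬ P t

theorem IsFirstExit.unique {α : Type*} [LinearOrder α] {P : α → Prop} {t₀ t₁ t₂ : α}
    (h₁ : IsFirstExit P t₀ t₁) (h₂ : IsFirstExit P t₀ t₂) : t₁ = t₂ := by
  by_contra hne
  rcases lt_or_gt_of_ne hne with h | h
  · exact h₁.2.2 (h₂.2.1 t₁ ⟨h₁.1, h⟩)
  · exact h₂.2.2 (h₁.2.1 t₂ ⟨h₂.1, h⟩)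

section Hysteresis

variable {ι : Type*} {Δ : ℝ}

def MemFlowSet (Δ : ℝ) (x q : ι → ℝ) : Prop :=
  ∀ i, |x i - q i| < Δ / 2

theorem not_memFlowSet_iff {x q : ι → ℝ} :
    ¬ MemFlowSet Δ x q ↔ ∃ i, x i ≤ q i - Δ / 2 ∨ q i + Δ / 2 ≤ x i := by
  simp only [MemFlowSet, not_forall, abs_lt, not_and_or, not_lt]
  refine exists_congr fun i => or_congr ?_ ?_ <;> constructor <;> intro h <;> linarith

noncomputable def jumpUpdate (Δ x q : ℝ) : ℝ :=
  if q + Δ / 2 ≤ x then q + Δ / 2 else if x ≤ q - Δ / 2 then q - Δ / 2 else q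

theorem jumpUpdate_of_abs_sub_lt {x q : ℝ} (h : |x - q| < Δ / 2) : jumpUpdate Δ x q = q := by
  rw [abs_lt] at h
  rw [jumpUpdate, if_neg (by linarith), if_neg (by linarith)]

theorem jumpUpdate_of_abs_sub_eq (hΔ : 0 < Δ) {x q : ℝ} (h : |x - q| = Δ / 2) :
    jumpUpdate Δ x q = x := by
  rcases abs_eq (by positivity) |>.1 h with h | h
  · rw [jumpUpdate, if_pos (by linarith)]; linarith
  · rw [jumpUpdate, if_neg (by linarith), if_pos (by linarith)]; linarith

theorem neg_mulVec_laplacian_two (q : Fin 2 → ℝ) :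
    -(!![1, -1; -1, 1] *ᵥ q) = ![q 1 - q 0, q 0 - q 1] := by
  ext i; fin_cases i <;> simp [dotProduct, Fin.sum_univ_two] <;> ring

theorem memFlowSet_two_iff {x q : Fin 2 → ℝ} :
    MemFlowSet Δ x q ↔ |x 0 - q 0| < Δ / 2 ∧ |x 1 - q 1| < Δ / 2 :=
  Fin.forall_fin_two

variable [Fintype ι]

/-- A solution on the hybrid time domain `⋃ⱼ [τ j, τ (j + 1)] × {j}`: `x j` and `q j` are the
states during the `j`-th interval of flow, and every `τ (j + 1)` is a jump time. -/
structure IsHysteresisSolution (Δ : ℝ) (L : Matrix ι ι ℝ) (τ : ℕ → ℝ)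
    (x : ℕ → ℝ → ι → ℝ) (q : ℕ → ι → ℝ) : Prop where
  mono : Monotone τ
  flow : ∀ j, ∀ s ∈ Icc (τ j) (τ (j + 1)), x j s = x j (τ j) + (s - τ j) • -(L *ᵥ q j)
  mem_flowSet : ∀ j, ∀ s ∈ Ico (τ j) (τ (j + 1)), MemFlowSet Δ (x j s) (q j)
  jump_x : ∀ j, x (j + 1) (τ (j + 1)) = x j (τ (j + 1))
  jump_q : ∀ j i, q (j + 1) i = jumpUpdate Δ (x j (τ (j + 1)) i) (q j i)
  not_mem_flowSet : ∀ j, ¬ MemFlowSet Δ (x j (τ (j + 1))) (q j)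

namespace IsHysteresisSolution

variable {L : Matrix ι ι ℝ} {τ : ℕ → ℝ} {x : ℕ → ℝ → ι → ℝ} {q : ℕ → ι → ℝ}

theorem isFirstExit (hs : IsHysteresisSolution Δ L τ x q) (j : ℕ) :
    IsFirstExit (fun s => MemFlowSet Δ (x j (τ j) + (s - τ j) • -(L *ᵥ q j)) (q j))
      (τ j) (τ (j + 1)) := by
  have hle : τ j ≤ τ (j + 1) := hs.mono j.le_succ
  refine ⟨hle, fun s hs' => ?_, ?_⟩
  · dsimp only
    rw [← hs.flow j s (Ico_subset_Icc_self hs')]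
    exact hs.mem_flowSet j s hs'
  · dsimp only
    rw [← hs.flow j _ ⟨hle, le_rfl⟩]
    exact hs.not_mem_flowSet j

theorem x_succ_eq (hs : IsHysteresisSolution Δ L τ x q) (j : ℕ) :
    x (j + 1) (τ (j + 1)) = x j (τ j) + (τ (j + 1) - τ j) • -(L *ᵥ q j) := by
  rw [hs.jump_x, hs.flow j _ ⟨hs.mono j.le_succ, le_rfl⟩]

theorem q_succ_eq (hs : IsHysteresisSolution Δ L τ x q) (hΔ : 0 < Δ) {j : ℕ}
    (h : ∀ i, x (j + 1) (τ (j + 1)) i = q j i ∨ |x (j + 1) (τ (j + 1)) i - q j i| = Δ / 2) :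
    q (j + 1) = x (j + 1) (τ (j + 1)) := by
  ext i
  rw [hs.jump_q, ← hs.jump_x]
  rcases h i with h | h
  · rw [h, jumpUpdate_of_abs_sub_lt (by simpa using half_pos hΔ)]
  · exact jumpUpdate_of_abs_sub_eq hΔ h

variable {τ : ℕ → ℝ} {x : ℕ → ℝ → Fin 2 → ℝ} {q : ℕ → Fin 2 → ℝ} {j : ℕ} {a b : ℝ}

theorem initial_stage (hs : IsHysteresisSolution Δ !![1, -1; -1, 1] τ x q) (hΔ : 0 < Δ)
    (hx : x j (τ j) = ![a - Δ / 4, a + 3 * Δ / 4]) (hq : q j = ![a, a + Δ]) :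
    τ (j + 1) = τ j + 1 / 4 ∧ x (j + 1) (τ (j + 1)) = ![a, a + Δ / 2] ∧
      q (j + 1) = ![a, a + Δ / 2] := by
  have hv : -(!![1, -1; -1, 1] *ᵥ q j) = ![Δ, -Δ] := by
    rw [neg_mulVec_laplacian_two, hq]; ext i; fin_cases i <;> simp
  have hT : τ (j + 1) = τ j + 1 / 4 := by
    refine (hs.isFirstExit j).unique ⟨by linarith, fun s hs' => ?_, ?_⟩ <;>
      rw [hx, hv, hq] <;>
      simp only [memFlowSet_two_iff, Pi.add_apply, Pi.smul_apply, smul_eq_mul, cons_val_zero,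
        cons_val_one]
    · obtain ⟨h₀, h₁⟩ := hs'
      constructor <;> rw [abs_lt] <;> constructor <;> nlinarith
    · rw [show a + 3 * Δ / 4 + (τ j + 1 / 4 - τ j) * -Δ - (a + Δ) = -(Δ / 2) by ring, abs_neg]
      exact fun h => lt_irrefl _ (h.2.trans_le (le_abs_self _))
  have hxT : x (j + 1) (τ (j + 1)) = ![a, a + Δ / 2] := by
    rw [hs.x_succ_eq, hx, hv, hT]
    ext i; fin_cases i <;> simp <;> ring
  refine ⟨hT, hxT, ?_⟩
  rw [hs.q_succ_eq hΔ, hxT]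
  simp only [Fin.forall_fin_two, hxT, hq, cons_val_zero, cons_val_one]
  refine ⟨Or.inl trivial, Or.inr ?_⟩
  rw [show a + Δ / 2 - (a + Δ) = -(Δ / 2) by ring, abs_neg, abs_of_pos (half_pos hΔ)]

theorem swap_stage (hs : IsHysteresisSolution Δ !![1, -1; -1, 1] τ x q) (hΔ : 0 < Δ)
    (hab : |b - a| = Δ / 2) (hx : x j (τ j) = ![a, b]) (hq : q j = ![a, b]) :
    τ (j + 1) = τ j + 1 ∧ x (j + 1) (τ (j + 1)) = ![b, a] ∧ q (j + 1) = ![b, a] := by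
  have hba : |a - b| = Δ / 2 := by rw [abs_sub_comm, hab]
  have hv : -(!![1, -1; -1, 1] *ᵥ q j) = ![b - a, a - b] := by
    rw [neg_mulVec_laplacian_two, hq]; simp
  have hT : τ (j + 1) = τ j + 1 := by
    refine (hs.isFirstExit j).unique ⟨by linarith, fun s hs' => ?_, ?_⟩ <;>
      rw [hx, hv, hq] <;>
      simp only [memFlowSet_two_iff, Pi.add_apply, Pi.smul_apply, smul_eq_mul, cons_val_zero,
        cons_val_one, add_sub_cancel_left, abs_mul]
    · obtain ⟨h₀, h₁⟩ := hs'
      rw [hab, hba, abs_of_nonneg (sub_nonneg.2 h₀)]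
      constructor <;> nlinarith
    · simp [hab]
  have hxT : x (j + 1) (τ (j + 1)) = ![b, a] := by
    rw [hs.x_succ_eq, hx, hv, hT]
    ext i; fin_cases i <;> simp
  refine ⟨hT, hxT, ?_⟩
  rw [hs.q_succ_eq hΔ, hxT]
  simp only [Fin.forall_fin_two, hxT, hq, cons_val_zero, cons_val_one, hab, hba, or_true,
    and_self]

end IsHysteresisSolution

end Hysteresis

/-- finite-time limit cycle for the two-agent hysteretic hybrid
system `ẋ₁ = q₂ − q₁`, `ẋ₂ = q₁ − q₂` (i.e. `ẋ = −Lq` with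
`L = [[1,−1],[−1,1]]`).  For the initial condition
`x(0,0) = (kΔ − Δ/4, kΔ + 3Δ/4)`, `q(0,0) = (kΔ, kΔ + Δ)`, the (unique)
solution jumps at times `1/4`, `5/4`, `9/4` and satisfies
`z(9/4, 3) = z(1/4, 1)`: a periodic orbit is reached in finite time, so the
solution does not converge to the set of equilibria. -/
theorem hybrid_limit_cycle (Δ : ℝ) (hΔ : 0 < Δ) (k : ℤ)
    (L : Matrix (Fin 2) (Fin 2) ℝ) (hL : L = !![1, -1; -1, 1])
    (τ : ℕ → ℝ) (hτ0 : τ 0 = 0) (hτ : Monotone τ)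
    (x : ℕ → ℝ → Fin 2 → ℝ) (q : ℕ → Fin 2 → ℝ)
    (hx0 : x 0 0 = ![k * Δ - Δ / 4, k * Δ + 3 * Δ / 4])
    (hq0 : q 0 = ![k * Δ, k * Δ + Δ])
    (hflow : ∀ j, ∀ s ∈ Set.Icc (τ j) (τ (j + 1)),
      x j s = x j (τ j) + (s - τ j) • (-(L.mulVec (q j))))
    (hC : ∀ j, ∀ s ∈ Set.Ico (τ j) (τ (j + 1)), ∀ i, |x j s i - q j i| < Δ / 2)
    (hjumpx : ∀ j, x (j + 1) (τ (j + 1)) = x j (τ (j + 1)))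
    (hjumpq : ∀ j i, q (j + 1) i =
      if q j i + Δ / 2 ≤ x j (τ (j + 1)) i then q j i + Δ / 2
      else if x j (τ (j + 1)) i ≤ q j i - Δ / 2 then q j i - Δ / 2
      else q j i)
    (hjumpD : ∀ j, ∃ i, x j (τ (j + 1)) i ≤ q j i - Δ / 2 ∨
      q j i + Δ / 2 ≤ x j (τ (j + 1)) i) :
    τ 1 = 1 / 4 ∧ τ 2 = 5 / 4 ∧ τ 3 = 9 / 4 ∧
      x 3 (9 / 4) = x 1 (1 / 4) ∧ q 3 = q 1 := by
  subst hL
  have hs : IsHysteresisSolution Δ !![1, -1; -1, 1] τ x q :=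
    ⟨hτ, hflow, hC, hjumpx, hjumpq, fun j => not_memFlowSet_iff.2 (hjumpD j)⟩
  set a : ℝ := k * Δ
  have hgap : |a + Δ / 2 - a| = Δ / 2 := by
    rw [add_sub_cancel_left, abs_of_pos (half_pos hΔ)]
  obtain ⟨hτ1, hx1, hq1⟩ :
      τ 1 = τ 0 + 1 / 4 ∧ x 1 (τ 1) = ![a, a + Δ / 2] ∧ q 1 = ![a, a + Δ / 2] :=
    hs.initial_stage hΔ (by rwa [hτ0]) hq0
  obtain ⟨hτ2, hx2, hq2⟩ :
      τ 2 = τ 1 + 1 ∧ x 2 (τ 2) = ![a + Δ / 2, a] ∧ q 2 = ![a + Δ / 2, a] :=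
    hs.swap_stage hΔ hgap hx1 hq1
  obtain ⟨hτ3, hx3, hq3⟩ :
      τ 3 = τ 2 + 1 ∧ x 3 (τ 3) = ![a, a + Δ / 2] ∧ q 3 = ![a, a + Δ / 2] :=
    hs.swap_stage hΔ (by rwa [abs_sub_comm]) hx2 hq2
  refine ⟨by linarith, by linarith, by linarith, ?_, hq3.trans hq1.symm⟩
  rw [show (9 / 4 : ℝ) = τ 3 by linarith, show (1 / 4 : ℝ) = τ 1 by linarith, hx3, hx1]
end
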